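/- arXiv:2406.03783 — 4 statements merged into one kernel-verified Lean document; each statement's English description precedes it below -/
import Mathlib

section
/- For integers k ≥ 2 and n ≥ 1, the number of k-ary trees with n vertices equals (1/((k-1)n+1)) * C(kn, n), where C denotes the binomial coefficient. In particular, this quantity (kn choose n) is divisible by (k-1)n+1. -/
/-- A `k`-ary tree: either the empty tree, or a root with `k` ordered subtrees. -/
inductive KTree (k : ℕ) : Type
  | leaf : KTree k
  | node : (Fin k → KTree k) → KTree k

/-- The number of vertices of a `k`-ary tree. -/
def KTree.size {k : ℕ} : KTree k → ℕ
  | .leaf => 0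
  | .node f => 1 + ∑ i : Fin k, (f i).size

namespace KaryProof
open List

def wt (k : ℕ) (b : Bool) : ℤ := if b then (k:ℤ) - 1 else -1

def wsum (k : ℕ) (l : List Bool) : ℤ := (l.map (wt k)).sum

lemma wsum_nil (k : ℕ) : wsum k [] = 0 := rfl
lemma wsum_cons (k : ℕ) (b : Bool) (l : List Bool) :
    wsum k (b :: l) = wt k b + wsum k l := by simp [wsum]
lemma wsum_append (k : ℕ) (l₁ l₂ : List Bool) :
    wsum k (l₁ ++ l₂) = wsum k l₁ + wsum k l₂ := by simp [wsum]

lemma wsum_eq (k : ℕ) (l : List Bool) :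
    wsum k l = k * (l.count true) - l.length := by
  induction l with
  | nil => simp [wsum]
  | cons b t ih =>
    cases b <;> simp [wsum_cons, ih, wt, List.count_cons] <;> ring

def word {k : ℕ} : KTree k → List Bool
  | .leaf => [false]
  | .node f => true :: (List.ofFn fun i => word (f i)).flatten

lemma word_length {k : ℕ} (T : KTree k) : (word T).length = k * T.size + 1 := by
  induction T with
  | leaf => simp [word, KTree.size]
  | node f ih =>
    simp [word, KTree.size, List.length_flatten, Function.comp, ih,
      List.sum_ofFn, Finset.sum_add_distrib]
    rw [mul_add, mul_one, Finset.mul_sum, add_comm]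

lemma word_count {k : ℕ} (T : KTree k) : (word T).count true = T.size := by
  induction T with
  | leaf => simp [word, KTree.size]
  | node f ih =>
    simp [word, KTree.size, List.count_flatten, Function.comp, ih, List.sum_ofFn]
    ring

def Ballot (k : ℕ) (l : List Bool) : Prop :=
  (∀ i < l.length, 0 ≤ wsum k (l.take i)) ∧ wsum k l = -1

lemma wsum_word {k : ℕ} (T : KTree k) : wsum k (word T) = -1 := by
  rw [wsum_eq, word_count, word_length]; push_cast; ring

lemma flatten_prefix (k : ℕ) : ∀ (ws : List (List Bool)), (∀ w ∈ ws, Ballot k w) →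
    ∀ i < ws.flatten.length, -(ws.length : ℤ) < wsum k (ws.flatten.take i) := by
  intro ws
  induction ws with
  | nil => simp
  | cons w tl ih =>
    intro hball i hi
    have hbw : Ballot k w := hball w (by simp)
    by_cases hiw : i ≤ w.length
    · rcases lt_or_eq_of_le hiw with h | h
      · have h0 := hbw.1 i h
        rw [List.flatten_cons, List.take_append_of_le_length hiw]
        have : (0:ℤ) < ((w :: tl).length : ℤ) := by
          simp only [List.length_cons]; push_cast; omega
        linarith
      · rw [List.flatten_cons, List.take_append_of_le_length hiw, h, List.take_length, hbw.2]
        have htl : tl ≠ [] := by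
          rintro rfl; simp at hi; omega
        have h1 : 1 ≤ tl.length := List.length_pos_iff.mpr htl
        simp only [List.length_cons]; push_cast; omega
    · push_neg at hiw
      rw [List.flatten_cons, List.take_append,
        List.take_of_length_le (le_of_lt hiw), wsum_append, hbw.2]
      have hi' : i - w.length < tl.flatten.length := by
        rw [List.flatten_cons, List.length_append] at hi; omega
      have h2 := ih (fun v hv => hball v (by simp [hv])) _ hi'
      simp only [List.length_cons]
      push_cast
      linarith

lemma word_prefix_nonneg {k : ℕ} (T : KTree k) :
    ∀ i < (word T).length, 0 ≤ wsum k ((word T).take i) := by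
  induction T with
  | leaf =>
    intro i hi
    have hz : i = 0 := by simp [word] at hi; omega
    subst hz; simp [wsum]
  | node f ih =>
    intro i hi
    match i with
    | 0 => simp [wsum]
    | j + 1 =>
      simp only [word, List.take_succ_cons, wsum_cons]
      have hj : j < ((List.ofFn fun i => word (f i)).flatten).length := by
        simpa [word] using hi
      have hb : ∀ w ∈ (List.ofFn fun i => word (f i)), Ballot k w := by
        intro w hw
        rw [List.mem_ofFn] at hw
        obtain ⟨a, rfl⟩ := hw
        exact ⟨ih a, wsum_word (f a)⟩
      have h3 := flatten_prefix k _ hb j hj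
      simp only [List.length_ofFn] at h3
      have h4 := Int.add_one_le_iff.mpr h3
      simp only [wt, if_true]
      linarith

lemma word_ballot {k : ℕ} (T : KTree k) : Ballot k (word T) :=
  ⟨word_prefix_nonneg T, wsum_word T⟩
lemma words_inj_aux {k : ℕ} : ∀ N (ts ts' : List (KTree k)) (r r' : List Bool),
    ((ts.map word).flatten).length ≤ N → ts.length = ts'.length →
    (ts.map word).flatten ++ r = (ts'.map word).flatten ++ r' →
    ts = ts' ∧ r = r' := by
  intro N
  induction N using Nat.strong_induction_on with
  | _ N IH =>
    intro ts ts' r r' hlen hlth heq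
    match ts, ts' with
    | [], [] => simpa using heq
    | [], T' :: tl' => simp at hlth
    | T :: tl, [] => simp at hlth
    | T :: tl, T' :: tl' =>
      match T, T' with
      | KTree.leaf, KTree.node f' => simp [word] at heq
      | KTree.node f, KTree.leaf => simp [word] at heq
      | KTree.leaf, KTree.leaf =>
        simp only [List.map_cons, List.flatten_cons, word, List.cons_append,
          List.singleton_append, List.cons.injEq, true_and] at heq
        have hlen' : ((tl.map word).flatten).length < N := by
          rw [List.length_flatten, List.map_map]
          rw [List.map_cons, List.flatten_cons, List.length_append,
            List.length_flatten, List.map_map] at hlen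
          simp [word] at hlen; omega
        obtain ⟨h1, h2⟩ := IH _ hlen' tl tl' r r' le_rfl (by simpa using hlth)
          (by simpa [List.append_assoc] using heq)
        exact ⟨by rw [h1], h2⟩
      | KTree.node f, KTree.node f' =>
        have e1 : ∀ (g : Fin k → KTree k) (tt : List (KTree k)),
            ((KTree.node g :: tt).map word).flatten
              = true :: ((List.ofFn g ++ tt).map word).flatten := by
          intro g tt
          simp [word, List.map_append, List.flatten_append, List.map_ofFn,
            Function.comp_def]
        rw [e1, e1] at heq
        have hlen' : (((List.ofFn f ++ tl).map word).flatten).length < N := by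
          rw [e1] at hlen
          simp only [List.length_cons] at hlen; omega
        simp only [List.cons_append, List.cons.injEq, true_and] at heq
        obtain ⟨h1, h2⟩ := IH _ hlen' (List.ofFn f ++ tl) (List.ofFn f' ++ tl') r r'
          le_rfl (by simpa using hlth) heq
        obtain ⟨h3, h4⟩ := List.append_inj h1 (by simp)
        rw [List.ofFn_inj] at h3
        exact ⟨by rw [h3, h4], h2⟩

lemma word_injective {k : ℕ} : Function.Injective (word (k := k)) := by
  intro T T' h
  have := words_inj_aux ((([T].map word).flatten).length) [T] [T'] [] [] le_rfl rfl
    (by simpa using h)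
  simpa using this.1
lemma wt_ge {k : ℕ} (b : Bool) : -1 ≤ wt k b := by
  cases b <;> simp [wt] <;> omega

lemma first_hit {k : ℕ} : ∀ (l : List Bool) (c : ℤ), 0 ≤ c → c + wsum k l ≤ -1 →
    ∃ t ≤ l.length, c + wsum k (l.take t) = -1 ∧ ∀ s < t, 0 ≤ c + wsum k (l.take s) := by
  intro l
  induction l with
  | nil => intro c h0 h1; rw [wsum_nil] at h1; omega
  | cons b r ih =>
    intro c h0 h1
    by_cases hb : c + wt k b = -1
    · refine ⟨1, by simp, ?_, ?_⟩
      · simpa [wsum_cons, wsum_nil] using hb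
      · intro s hs
        have : s = 0 := by omega
        subst this; simpa [wsum_nil] using h0
    · have h0' : 0 ≤ c + wt k b := by
        have := wt_ge (k := k) b; omega
      obtain ⟨t, ht, h2, h3⟩ := ih (c + wt k b)
        h0' (by rw [wsum_cons] at h1; linarith)
      refine ⟨t + 1, by simpa using ht, ?_, ?_⟩
      · rw [List.take_succ_cons, wsum_cons]; linarith
      · intro s hs
        match s with
        | 0 => simpa [wsum_nil] using h0
        | s + 1 =>
          rw [List.take_succ_cons, wsum_cons]
          have := h3 s (by omega); linarith

lemma wsum_take_drop (k : ℕ) (l : List Bool) (a b : ℕ) :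
    wsum k ((l.take b).drop a) = wsum k ((l.take b).take a) + wsum k ((l.take b).drop a) - wsum k ((l.take b).take a) := by
  ring

lemma wsum_drop_take (k : ℕ) (l : List Bool) (a : ℕ) :
    wsum k (l.drop a) = wsum k l - wsum k (l.take a) := by
  conv_lhs => rw [show l.drop a = l.drop a from rfl]
  have h := List.take_append_drop a l
  have := wsum_append k (l.take a) (l.drop a)
  rw [h] at this
  linarith

lemma ofFn_cast {α : Type*} {a b : ℕ} (h : b = a) (g : Fin a → α) :
    List.ofFn (fun i : Fin b => g (Fin.cast h i)) = List.ofFn g := by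
  subst h; rfl

lemma map_word_eq_ofFn {k : ℕ} (ts : List (KTree k)) :
    ts.map word = List.ofFn (fun j : Fin ts.length => word (ts.get j)) := by
  conv_lhs => rw [← List.ofFn_get ts]
  rw [List.map_ofFn]
  rfl

lemma parse_many {k : ℕ} : ∀ N (l : List Bool), l.length ≤ N → ∀ j : ℕ,
    wsum k l = -(j:ℤ) → (∀ i < l.length, -(j:ℤ) < wsum k (l.take i)) →
    ∃ ts : List (KTree k), ts.length = j ∧ (ts.map word).flatten = l := by
  intro N
  induction N using Nat.strong_induction_on with
  | _ N IH =>
    intro l hlN j hsum hpre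
    match j with
    | 0 =>
      match l with
      | [] => exact ⟨[], rfl, rfl⟩
      | b :: r =>
        have := hpre 0 (by simp)
        simp [wsum_nil] at this
    | j + 1 =>
      obtain ⟨t, htl, h2, h3⟩ := first_hit l 0 le_rfl
        (by rw [hsum]; push_cast; omega)
      simp only [zero_add] at h2 h3
      have ht1 : 1 ≤ t := by
        by_contra h
        have : t = 0 := by omega
        subst this; simp [wsum_nil] at h2
      match l with
      | [] => rw [wsum_nil] at hsum; omega
      | b :: rr =>
        have hNpos : 1 ≤ N := by simp at hlN; omega
        have hT : ∃ T : KTree k, word T = (b :: rr).take t := by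
          cases b with
          | false =>
            have ht : t = 1 := by
              by_contra h
              have h1lt : 1 < t := by omega
              have := h3 1 h1lt
              simp [wsum_cons, wsum_nil, wt] at this
            refine ⟨KTree.leaf, ?_⟩
            rw [ht]; rfl
          | true =>
            set l := true :: rr with hl
            set r₁ : List Bool := (l.take t).drop 1 with hr₁
            have hw1 : wsum k (l.take 1) = (k : ℤ) - 1 := by
              rw [hl]
              simp [wsum_cons, wsum_nil, wt]
            have hr₁sum : wsum k r₁ = -(k : ℤ) := by
              rw [hr₁, wsum_drop_take, List.take_take, h2,
                inf_eq_left.mpr (show (1:ℕ) ≤ t by omega), hw1]; ring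
            have hr₁len : r₁.length = t - 1 := by
              simp [hr₁, List.length_drop, List.length_take]
              omega
            have hr₁pre : ∀ i < r₁.length, -(k : ℤ) < wsum k (r₁.take i) := by
              intro i hi
              have hle : 1 + i ≤ t := by
                rw [hr₁len] at hi; omega
              have e : r₁.take i = (l.take (1 + i)).drop 1 := by
                rw [hr₁, List.take_drop, List.take_take, inf_eq_left.mpr hle]
              rw [e, wsum_drop_take, List.take_take,
                inf_eq_left.mpr (show (1:ℕ) ≤ 1 + i by omega), hw1]
              have := h3 (1 + i) (by omega)
              have hk0 : (0:ℤ) ≤ (k:ℤ) := by positivity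
              linarith
            obtain ⟨ts₁, hts₁len, hts₁⟩ := IH (N - 1) (by omega) r₁
              (by rw [hr₁len]; omega) k hr₁sum hr₁pre
            refine ⟨KTree.node (fun i => ts₁.get (Fin.cast hts₁len.symm i)), ?_⟩
            show true :: (List.ofFn fun i => word (ts₁.get (Fin.cast hts₁len.symm i))).flatten = l.take t
            rw [ofFn_cast hts₁len.symm (fun j => word (ts₁.get j)), ← map_word_eq_ofFn, hts₁]
            rw [hr₁]
            have : l.take t = true :: ((l.take t).drop 1) := by
              have : (l.take t).take 1 = [true] := by
                rw [List.take_take, inf_eq_left.mpr (show (1:ℕ) ≤ t by omega), hl]; rfl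
              conv_lhs => rw [← List.take_append_drop 1 (l.take t)]
              rw [this]; rfl
            rw [← this]
        obtain ⟨T, hT⟩ := hT
        set l := b :: rr with hl
        set l₂ : List Bool := l.drop t with hl₂
        have hl₂sum : wsum k l₂ = -(j : ℤ) := by
          rw [hl₂, wsum_drop_take, hsum, h2]; push_cast; ring
        have hl₂pre : ∀ i < l₂.length, -(j : ℤ) < wsum k (l₂.take i) := by
          intro i hi
          have e : l₂.take i = (l.take (t + i)).drop t := by
            rw [hl₂, List.take_drop]
          have ht' : (l.take (t + i)).take t = l.take t := by
            rw [List.take_take, inf_eq_left.mpr (show t ≤ t + i by omega)]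
          rw [e, wsum_drop_take, ht', h2]
          have hlt : t + i < l.length := by
            rw [hl₂, List.length_drop] at hi; omega
          have := hpre (t + i) hlt
          push_cast at this ⊢
          linarith
        obtain ⟨ts₂, hts₂len, hts₂⟩ := IH (N - t) (by omega) l₂
          (by rw [hl₂, List.length_drop]; omega) j hl₂sum hl₂pre
        refine ⟨T :: ts₂, by simp [hts₂len], ?_⟩
        rw [List.map_cons, List.flatten_cons, hT, hts₂, hl₂, List.take_append_drop]

lemma parse_one {k : ℕ} (l : List Bool) (hb : Ballot k l) :
    ∃ T : KTree k, word T = l := by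
  obtain ⟨ts, hlen, hfl⟩ := parse_many l.length l le_rfl 1
    (by rw [hb.2]; norm_num)
    (by intro i hi; have := hb.1 i hi; push_cast; linarith)
  match ts, hlen with
  | [T], _ => exact ⟨T, by simpa using hfl⟩
lemma wsum_perm {k : ℕ} {l l' : List Bool} (h : l.Perm l') : wsum k l = wsum k l' :=
  (h.map (wt k)).sum_eq

lemma drop_two {α : Type*} (l : List α) (d : ℕ) (hd : d ≤ l.length) :
    (l ++ l).drop d = l.rotate d ++ l.drop d := by
  rw [List.rotate_eq_drop_append_take hd, List.drop_append_of_le_length hd,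
    List.append_assoc, List.take_append_drop]

lemma take_rotate' {α : Type*} (l : List α) (d i : ℕ) (hd : d ≤ l.length)
    (hi : i ≤ l.length) :
    (l.rotate d).take i = ((l ++ l).take (d + i)).drop d := by
  rw [← List.take_drop, drop_two l d hd,
    List.take_append_of_le_length (by rw [List.length_rotate]; exact hi)]

lemma wsum_take_rotate {k : ℕ} (l : List Bool) (d i : ℕ) (hd : d ≤ l.length)
    (hi : i ≤ l.length) :
    wsum k ((l.rotate d).take i)
      = wsum k ((l ++ l).take (d + i)) - wsum k ((l ++ l).take d) := by
  rw [take_rotate' l d i hd hi, wsum_drop_take]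
  congr 2
  rw [List.take_take, inf_eq_left.mpr (by omega)]

section Cycle

variable {k : ℕ} (l : List Bool)

/-- prefix sums of `l ++ l`. -/
def S (k : ℕ) (l : List Bool) (i : ℕ) : ℤ := wsum k ((l ++ l).take i)

lemma S_le (h : ∀ _ : Unit, True) : True := trivial

lemma S_period (hw : wsum k l = -1) (i : ℕ) (hi : i ≤ l.length) :
    S k l (i + l.length) = S k l i - 1 := by
  unfold S
  rw [add_comm i l.length, List.take_length_add_append, wsum_append, hw,
    List.take_append_of_le_length hi]
  ring

lemma S_small (i : ℕ) (hi : i ≤ l.length) : S k l i = wsum k (l.take i) := by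
  unfold S; rw [List.take_append_of_le_length hi]

lemma ballot_rotate_iff (hw : wsum k l = -1) (d : ℕ) (hd : d ≤ l.length) :
    Ballot k (l.rotate d) ↔ ∀ i < l.length, S k l d ≤ S k l (d + i) := by
  constructor
  · intro hb i hi
    have := hb.1 i (by rwa [List.length_rotate])
    rw [wsum_take_rotate l d i hd (le_of_lt hi)] at this
    unfold S; linarith
  · intro h
    constructor
    · intro i hi
      rw [List.length_rotate] at hi
      rw [wsum_take_rotate l d i hd (le_of_lt hi)]
      have := h i hi
      unfold S at this; linarith
    · rw [wsum_perm ((l.rotate_perm d)), hw]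

lemma cycle_exists_unique (hw : wsum k l = -1) (hm1 : 0 < l.length) :
    ∃! d : Fin l.length, Ballot k (l.rotate (d : ℕ)) := by
  set m := l.length with hm
  -- minimum of S over range m, first index attaining it
  obtain ⟨d₀, hd₀m, hd₀min⟩ := Finset.exists_min_image (Finset.range m) (S k l)
    ⟨0, by simpa using hm1⟩
  rw [Finset.mem_range] at hd₀m
  have hP : ∃ d, d < m ∧ ∀ e < m, S k l d ≤ S k l e := by
    exact ⟨d₀, hd₀m, fun e he => hd₀min e (Finset.mem_range.mpr he)⟩
  classical
  set d := Nat.find hP with hd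
  obtain ⟨hdm, hdmin⟩ := Nat.find_spec hP
  have hstrict : ∀ e < d, S k l d < S k l e := by
    intro e he
    have h1 : S k l d ≤ S k l e := hdmin e (lt_of_lt_of_le he (le_of_lt hdm))
    rcases lt_or_eq_of_le h1 with h | h
    · exact h
    · exfalso
      have : e < m ∧ ∀ e' < m, S k l e ≤ S k l e' :=
        ⟨lt_trans he hdm, fun e' he' => h ▸ hdmin e' he'⟩
      exact Nat.find_min hP he this
  have hgood : ∀ i < m, S k l d ≤ S k l (d + i) := by
    intro i hi
    by_cases hcase : d + i < m
    · exact hdmin _ hcase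
    · push_neg at hcase
      have he : d + i - m < d := by omega
      have heq : d + i = (d + i - m) + m := by omega
      rw [heq, S_period l hw _ (by omega)]
      have := hstrict _ he
      omega
  refine ⟨⟨d, hdm⟩, (ballot_rotate_iff l hw d (le_of_lt hdm)).mpr hgood, ?_⟩
  rintro ⟨e, hem⟩ hbe
  have hge : ∀ i < m, S k l e ≤ S k l (e + i) :=
    (ballot_rotate_iff l hw e (le_of_lt hem)).mp hbe
  have key : ∀ a b : ℕ, a < b → b < m →
      (∀ i < m, S k l a ≤ S k l (a + i)) → (∀ i < m, S k l b ≤ S k l (b + i)) → False := by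
    intro a b hab hbm hga hgb
    have h1 : S k l a ≤ S k l b := by
      have := hga (b - a) (by omega)
      rwa [show a + (b - a) = b by omega] at this
    have h2 : S k l b ≤ S k l (a + m) := by
      have := hgb (a + m - b) (by omega)
      rwa [show b + (a + m - b) = a + m by omega] at this
    rw [S_period l hw a (by omega)] at h2
    omega
  simp only [Fin.mk.injEq]
  rcases lt_trichotomy e d with h | h | h
  · exact absurd (key e d h hdm hge hgood) (by simp)
  · exact h
  · exact absurd (key d e h hem hgood hge) (by simp)

end Cycle
lemma count_rotate (l : List Bool) (d : ℕ) (b : Bool) :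
    (l.rotate d).count b = l.count b := (l.rotate_perm d).count_eq b

lemma rotate_back {α : Type*} (l : List α) (g : ℕ) (hg : g < l.length) :
    (l.rotate g).rotate (l.length - g) = l := by
  rw [List.rotate_rotate, show g + (l.length - g) = l.length by omega,
    List.rotate_length]

/-- the unique good rotation amount, as a natural number -/
noncomputable def gd (k : ℕ) (l : List Bool) : ℕ :=
  if h : wsum k l = -1 ∧ 0 < l.length then
    ((cycle_exists_unique l h.1 h.2).choose : ℕ) else 0

lemma gd_lt {k : ℕ} (l : List Bool) (hw : wsum k l = -1) (h1 : 0 < l.length) :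
    gd k l < l.length := by
  unfold gd; rw [dif_pos ⟨hw, h1⟩]
  exact ((cycle_exists_unique l hw h1).choose).isLt

lemma gd_ballot {k : ℕ} (l : List Bool) (hw : wsum k l = -1) (h1 : 0 < l.length) :
    Ballot k (l.rotate (gd k l)) := by
  unfold gd; rw [dif_pos ⟨hw, h1⟩]
  exact (cycle_exists_unique l hw h1).choose_spec.1

lemma gd_unique {k : ℕ} (l : List Bool) (hw : wsum k l = -1) (h1 : 0 < l.length)
    (e : ℕ) (he : e < l.length) (hb : Ballot k (l.rotate e)) : e = gd k l := by
  unfold gd; rw [dif_pos ⟨hw, h1⟩]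
  exact congrArg Fin.val ((cycle_exists_unique l hw h1).choose_spec.2 ⟨e, he⟩ hb)

section Assemble

variable (k n : ℕ)

def Full (k n : ℕ) : Type :=
  {l : List Bool // l.length = k * n + 1 ∧ l.count true = n}

def Bal (k n : ℕ) : Type :=
  {l : List Bool // l.length = k * n + 1 ∧ l.count true = n ∧ Ballot k l}

lemma full_wsum {l : List Bool} (h1 : l.length = k * n + 1) (h2 : l.count true = n) :
    wsum k l = -1 := by
  rw [wsum_eq, h1, h2]; push_cast; ring

noncomputable def fullEquiv : Full k n ≃ (Fin (k * n + 1)) × Bal k n where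
  toFun x :=
    (⟨gd k x.1,
      by
        have h1 := gd_lt x.1 (full_wsum k n x.2.1 x.2.2) (by rw [x.2.1]; omega)
        have h2 := x.2.1
        omega⟩,
     ⟨x.1.rotate (gd k x.1),
      by rw [List.length_rotate]; exact x.2.1,
      by rw [count_rotate]; exact x.2.2,
      gd_ballot x.1 (full_wsum k n x.2.1 x.2.2) (by rw [x.2.1]; omega)⟩)
  invFun p :=
    ⟨p.2.1.rotate (k * n + 1 - (p.1 : ℕ)),
     by rw [List.length_rotate]; exact p.2.2.1,
     by rw [count_rotate]; exact p.2.2.2.1⟩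
  left_inv := by
    rintro ⟨l, hlen, hcnt⟩
    apply Subtype.ext
    dsimp only
    rw [← hlen]
    exact rotate_back l _ (gd_lt l (full_wsum k n hlen hcnt) (by rw [hlen]; omega))
  right_inv := by
    rintro ⟨⟨e, he⟩, ⟨b, hblen, hbcnt, hbal⟩⟩
    have hl'len : (b.rotate (k * n + 1 - e)).length = k * n + 1 := by
      rw [List.length_rotate]; exact hblen
    have hrot : (b.rotate (k * n + 1 - e)).rotate e = b := by
      rw [List.rotate_rotate, show k * n + 1 - e + e = k * n + 1 by omega,
        ← hblen, List.rotate_length]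
    have hgd : e = gd k (b.rotate (k * n + 1 - e)) := gd_unique (b.rotate (k * n + 1 - e))
      (full_wsum k n hl'len (by rw [count_rotate]; exact hbcnt))
      (by rw [hl'len]; omega) e (by rw [hl'len]; exact he) (by rw [hrot]; exact hbal)
    dsimp only
    refine Prod.ext (Fin.ext ?_) (Subtype.ext ?_)
    · exact hgd.symm
    · show (b.rotate (k * n + 1 - e)).rotate (gd k (b.rotate (k * n + 1 - e))) = b
      rw [← hgd]
      exact hrot

noncomputable def balEquiv : {T : KTree k // T.size = n} ≃ Bal k n := by
  apply Equiv.ofBijective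
    (fun x => (⟨word x.1,
      by rw [word_length, x.2],
      by rw [word_count]; exact x.2,
      word_ballot x.1⟩ : Bal k n))
  constructor
  · rintro ⟨T, hT⟩ ⟨T', hT'⟩ h
    have h2 : word T = word T' := congrArg Subtype.val h
    exact Subtype.ext (word_injective h2)
  · rintro ⟨l, hlen, hcnt, hbal⟩
    obtain ⟨T, hT⟩ := parse_one l hbal
    exact ⟨⟨T, by rw [← word_count T, hT]; exact hcnt⟩, Subtype.ext hT⟩

lemma count_true_sum (l : List Bool) :
    l.count true = (l.map (fun b => if b then 1 else 0)).sum := by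
  induction l with
  | nil => simp
  | cons b t ih => cases b <;> simp [List.count_cons, ih, Nat.add_comm]

def fullVecEquiv : Full k n ≃
    {v : Fin (k * n + 1) → Bool // (Finset.univ.filter (fun i => v i = true)).card = n} := by
  have key : ∀ v : Fin (k * n + 1) → Bool,
      (List.ofFn v).count true = (Finset.univ.filter (fun i => v i = true)).card := by
    intro v
    rw [count_true_sum, List.map_ofFn, List.sum_ofFn, Finset.card_filter]
    simp [Function.comp]
  refine
    { toFun := fun x => ⟨fun i => x.1.get (Fin.cast x.2.1.symm i), ?_⟩
      invFun := fun v => ⟨List.ofFn v.1, by simp, by rw [key]; exact v.2⟩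
      left_inv := ?_
      right_inv := ?_ }
  · rw [← key]
    have h5 : List.ofFn (fun i => x.1.get (Fin.cast x.2.1.symm i)) = x.1 := by
      rw [ofFn_cast x.2.1.symm x.1.get, List.ofFn_get]
    rw [h5]
    exact x.2.2
  · rintro ⟨l, hlen, hcnt⟩
    apply Subtype.ext
    simp only
    rw [ofFn_cast hlen.symm l.get, List.ofFn_get]
  · rintro ⟨v, hv⟩
    apply Subtype.ext
    funext i
    show (List.ofFn v).get _ = v i
    rw [List.get_ofFn]
    exact congrArg v (Fin.ext rfl)

def vecFinsetEquiv :
    {v : Fin (k * n + 1) → Bool // (Finset.univ.filter (fun i => v i = true)).card = n}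
    ≃ {s : Finset (Fin (k * n + 1)) // s.card = n} := by
  refine
    { toFun := fun v => ⟨Finset.univ.filter (fun i => v.1 i = true), v.2⟩
      invFun := fun s => ⟨fun i => decide (i ∈ s.1), ?_⟩
      left_inv := ?_
      right_inv := ?_ }
  · have h6 : (Finset.univ.filter (fun i => decide (i ∈ s.1) = true)) = s.1 := by
      ext i; simp
    rw [h6]; exact s.2
  · rintro ⟨v, hv⟩
    apply Subtype.ext
    funext i
    simp
  · rintro ⟨s, hs⟩
    apply Subtype.ext
    ext i
    simp

lemma card_full : Nat.card (Full k n) = (k * n + 1).choose n := by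
  rw [Nat.card_congr ((fullVecEquiv k n).trans (vecFinsetEquiv k n)),
    Nat.card_eq_fintype_card, Fintype.card_finset_len, Fintype.card_fin]

lemma card_count :
    (k * n + 1).choose n = (k * n + 1) * Nat.card {T : KTree k // T.size = n} := by
  rw [← card_full, Nat.card_congr (fullEquiv k n), Nat.card_prod,
    Nat.card_eq_fintype_card, Fintype.card_fin, Nat.card_congr (balEquiv k n).symm]

end Assemble
end KaryProof

/-- The number of `k`-ary trees with `n` vertices is the `k`-Catalan number
`(1/((k-1)n+1)) * C(kn, n)`; in particular `(k-1)n+1` divides `C(kn, n)`. -/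
theorem kary_tree_count (k n : ℕ) (hk : 2 ≤ k) (hn : 1 ≤ n) :
    ((k - 1) * n + 1) ∣ (k * n).choose n ∧
    Nat.card {T : KTree k // T.size = n} = (k * n).choose n / ((k - 1) * n + 1) := by
  set B := Nat.card {T : KTree k // T.size = n} with hB
  have h1 : (k * n + 1).choose n = (k * n + 1) * B := KaryProof.card_count k n
  have hnle : n ≤ k * n := Nat.le_mul_of_pos_left n (by omega)
  have hsub : (k - 1) * n = k * n - n := by rw [Nat.sub_mul, one_mul]
  have hs1 : (k * n).choose ((k - 1) * n) = (k * n).choose n := by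
    rw [hsub, Nat.choose_symm hnle]
  have hs2 : (k * n + 1).choose ((k - 1) * n + 1) = (k * n + 1).choose n := by
    have e : (k - 1) * n + 1 = (k * n + 1) - n := by omega
    rw [e, Nat.choose_symm (by omega)]
  have hid := Nat.add_one_mul_choose_eq (k * n) ((k - 1) * n)
  rw [hs1, hs2, h1] at hid
  have hpos : 0 < k * n + 1 := by omega
  have hmain : (k * n).choose n = ((k - 1) * n + 1) * B := by
    apply Nat.eq_of_mul_eq_mul_left hpos
    rw [hid]; ring
  refine ⟨⟨B, hmain⟩, ?_⟩
  rw [hmain, Nat.mul_div_cancel_left _ (by omega)]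
end

section
/- For all integers a ≥ 1 and d ≥ 1, the graph G(a,d) — whose vertices are the non-decreasing a-tuples (j_1,...,j_a) with 1 ≤ j_1 ≤ ... ≤ j_a ≤ d, and whose edges join two tuples that differ in exactly one entry by exactly 1 — has a spanning tree of maximum degree at most 3. -/
/-- The set `S(a,d)` of non-decreasing `a`-tuples with entries in `{1,...,d}`,
encoded as monotone functions `Fin a → Fin d`. -/
def NondecTuple (a d : ℕ) : Type :=
  {f : Fin a → Fin d // ∀ i j : Fin a, i ≤ j → f i ≤ f j}

/-- The graph `G(a,d)` on non-decreasing tuples, where two tuples are adjacent iff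
they differ in exactly one entry, by exactly 1. -/
def Gad (a d : ℕ) : SimpleGraph (NondecTuple a d) where
  Adj f g := ∃ i : Fin a, (∀ j : Fin a, j ≠ i → f.1 j = g.1 j) ∧
      (((f.1 i : ℕ) + 1 = (g.1 i : ℕ)) ∨ ((g.1 i : ℕ) + 1 = (f.1 i : ℕ)))
  symm := by
    constructor
    rintro f g ⟨i, h1, h2⟩
    exact ⟨i, fun j hj => (h1 j hj).symm, h2.symm⟩
  loopless := by
    constructor
    rintro f ⟨i, -, h2⟩
    rcases h2 with h | h <;> omega

namespace GadTree

instance instFin (a d : ℕ) : Finite (NondecTuple a d) := by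
  unfold NondecTuple; infer_instance

variable {a d : ℕ}

/-- The sum of the entries. -/
def mm (f : NondecTuple a d) : ℕ := ∑ i, (f.1 i : ℕ)

/-- The set of nonzero positions. -/
def Z (f : NondecTuple a d) : Finset (Fin a) :=
  Finset.univ.filter (fun i => (f.1 i : ℕ) ≠ 0)

lemma mm_ne_zero_iff (f : NondecTuple a d) : mm f ≠ 0 ↔ (Z f).Nonempty := by
  constructor
  · intro h
    by_contra hc
    rw [Finset.not_nonempty_iff_eq_empty, Finset.eq_empty_iff_forall_notMem] at hc
    exact h (Finset.sum_eq_zero fun i _ => by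
      by_contra hi
      exact hc i (by simp [Z, hi]))
  · rintro ⟨i, hi⟩ h0
    rw [Z, Finset.mem_filter] at hi
    exact hi.2 (Finset.sum_eq_zero_iff.mp h0 i (Finset.mem_univ i))

noncomputable def i0 (f : NondecTuple a d) (h : (Z f).Nonempty) : Fin a :=
  (Z f).min' h

lemma i0_ne (f : NondecTuple a d) (h : (Z f).Nonempty) : (f.1 (i0 f h) : ℕ) ≠ 0 := by
  have := (Z f).min'_mem h
  simpa [Z, i0] using this

lemma i0_min (f : NondecTuple a d) (h : (Z f).Nonempty) :
    ∀ k : Fin a, k < i0 f h → (f.1 k : ℕ) = 0 := by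
  intro k hk
  by_contra hk0
  exact absurd ((Z f).min'_le k (by simp [Z, hk0])) (not_le.mpr hk)

/-- The parent: decrement the first nonzero entry. -/
noncomputable def pa (f : NondecTuple a d) : NondecTuple a d :=
  if h : (Z f).Nonempty then
    ⟨Function.update f.1 (i0 f h)
        ⟨(f.1 (i0 f h) : ℕ) - 1, lt_of_le_of_lt (Nat.sub_le _ _) (f.1 (i0 f h)).2⟩, by
      intro i j hij
      have hmono := f.2 i j hij
      rw [Fin.le_def] at hmono
      rw [Fin.le_def, Function.update_apply, Function.update_apply]
      split_ifs with h1 h2 h2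
      · exact le_refl _
      · have : (f.1 (i0 f h) : ℕ) ≤ (f.1 j : ℕ) := by
          have := f.2 (i0 f h) j (h1 ▸ hij)
          rwa [Fin.le_def] at this
        simp only []
        omega
      · have hlt0 : i < i0 f h := lt_of_le_of_ne (h2 ▸ hij) h1
        have hz : (f.1 i : ℕ) = 0 := i0_min f h i hlt0
        simp only []
        omega
      · exact hmono⟩
  else f

lemma pa_apply_ne (f : NondecTuple a d) (h : (Z f).Nonempty) (k : Fin a)
    (hk : k ≠ i0 f h) : (pa f).1 k = f.1 k := by
  have e : pa f = _ := dif_pos h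
  rw [e]
  exact Function.update_of_ne hk _ _

lemma pa_apply_i0 (f : NondecTuple a d) (h : (Z f).Nonempty) :
    ((pa f).1 (i0 f h) : ℕ) + 1 = (f.1 (i0 f h) : ℕ) := by
  have e : pa f = _ := dif_pos h
  rw [e]
  simp only [Function.update_self]
  have := i0_ne f h
  omega

lemma mm_pa (f : NondecTuple a d) (h : (Z f).Nonempty) : mm (pa f) + 1 = mm f := by
  have h1 : mm (pa f) = ((pa f).1 (i0 f h) : ℕ) + ∑ k ∈ Finset.univ.erase (i0 f h), ((pa f).1 k : ℕ) :=
    (Finset.add_sum_erase _ _ (Finset.mem_univ _)).symm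
  have h2 : mm f = (f.1 (i0 f h) : ℕ) + ∑ k ∈ Finset.univ.erase (i0 f h), (f.1 k : ℕ) :=
    (Finset.add_sum_erase _ _ (Finset.mem_univ _)).symm
  have h3 : ∑ k ∈ Finset.univ.erase (i0 f h), ((pa f).1 k : ℕ)
      = ∑ k ∈ Finset.univ.erase (i0 f h), (f.1 k : ℕ) := by
    refine Finset.sum_congr rfl fun k hk => ?_
    rw [pa_apply_ne f h k (Finset.ne_of_mem_erase hk)]
  rw [h1, h2, h3]
  have := pa_apply_i0 f h
  omega

lemma adj_pa (f : NondecTuple a d) (h : (Z f).Nonempty) : (Gad a d).Adj f (pa f) := by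
  refine ⟨i0 f h, fun j hj => (pa_apply_ne f h j hj).symm, Or.inr (pa_apply_i0 f h)⟩

/-- The spanning tree. -/
noncomputable def T (a d : ℕ) : SimpleGraph (NondecTuple a d) where
  Adj f g := (mm f ≠ 0 ∧ g = pa f) ∨ (mm g ≠ 0 ∧ f = pa g)
  symm := by tauto
  loopless := by
    constructor
    rintro f (⟨hf, hg⟩ | ⟨hf, hg⟩) <;>
    · have := mm_pa f ((mm_ne_zero_iff f).mp hf)
      rw [← hg] at this
      omega

lemma T_le : T a d ≤ Gad a d := by
  rintro f g (⟨hf, rfl⟩ | ⟨hg, rfl⟩)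
  · exact adj_pa f ((mm_ne_zero_iff f).mp hf)
  · exact (adj_pa g ((mm_ne_zero_iff g).mp hg)).symm

/- ### Children -/

lemma child_zero (v g : NondecTuple a d) (hg : (Z g).Nonempty) (hpa : pa g = v) :
    ∀ k : Fin a, k < i0 g hg → (v.1 k : ℕ) = 0 := by
  intro k hk
  rw [← hpa, pa_apply_ne g hg k (ne_of_lt hk)]
  exact i0_min g hg k hk

lemma child_lt (v g : NondecTuple a d) (hg : (Z g).Nonempty) (hpa : pa g = v)
    (hj : (i0 g hg : ℕ) + 1 < a) :
    (v.1 (i0 g hg) : ℕ) < (v.1 ⟨(i0 g hg : ℕ) + 1, hj⟩ : ℕ) := by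
  have h1 : (v.1 (i0 g hg) : ℕ) + 1 = (g.1 (i0 g hg) : ℕ) := by
    rw [← hpa]; exact pa_apply_i0 g hg
  have hne : (⟨(i0 g hg : ℕ) + 1, hj⟩ : Fin a) ≠ i0 g hg := by
    intro hc
    have := congrArg Fin.val hc
    simp at this
  have h2 : v.1 ⟨(i0 g hg : ℕ) + 1, hj⟩ = g.1 ⟨(i0 g hg : ℕ) + 1, hj⟩ := by
    rw [← hpa]; exact pa_apply_ne g hg _ hne
  have h3 : g.1 (i0 g hg) ≤ g.1 ⟨(i0 g hg : ℕ) + 1, hj⟩ :=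
    g.2 _ _ (by rw [Fin.le_def]; simp)
  rw [Fin.le_def] at h3
  rw [h2]
  omega

lemma child_eq (v g g' : NondecTuple a d) (hg : (Z g).Nonempty) (hg' : (Z g').Nonempty)
    (hpa : pa g = v) (hpa' : pa g' = v) (hidx : i0 g hg = i0 g' hg') : g = g' := by
  apply Subtype.ext
  funext k
  rcases eq_or_ne k (i0 g hg) with hke | hk
  · have h1 : (v.1 (i0 g hg) : ℕ) + 1 = (g.1 (i0 g hg) : ℕ) := by
      rw [← hpa]; exact pa_apply_i0 g hg
    have h2 : (v.1 (i0 g' hg') : ℕ) + 1 = (g'.1 (i0 g' hg') : ℕ) := by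
      rw [← hpa']; exact pa_apply_i0 g' hg'
    rw [← hidx] at h2
    rw [hke]
    exact Fin.ext (by omega)
  · have h1 : v.1 k = g.1 k := by rw [← hpa]; exact pa_apply_ne g hg k hk
    have h2 : v.1 k = g'.1 k := by
      rw [← hpa']; exact pa_apply_ne g' hg' k (by rw [← hidx]; exact hk)
    rw [← h1, ← h2]

lemma no_three_children (v g1 g2 g3 : NondecTuple a d)
    (h1 : mm g1 ≠ 0 ∧ pa g1 = v) (h2 : mm g2 ≠ 0 ∧ pa g2 = v) (h3 : mm g3 ≠ 0 ∧ pa g3 = v)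
    (h12 : g1 ≠ g2) (h13 : g1 ≠ g3) (h23 : g2 ≠ g3) : False := by
  have hZ1 := (mm_ne_zero_iff g1).mp h1.1
  have hZ2 := (mm_ne_zero_iff g2).mp h2.1
  have hZ3 := (mm_ne_zero_iff g3).mp h3.1
  set j1 := i0 g1 hZ1 with hj1
  set j2 := i0 g2 hZ2 with hj2
  set j3 := i0 g3 hZ3 with hj3
  -- distinct indices
  have d12 : j1 ≠ j2 := fun hc => h12 (child_eq v g1 g2 hZ1 hZ2 h1.2 h2.2 hc)
  have d13 : j1 ≠ j3 := fun hc => h13 (child_eq v g1 g3 hZ1 hZ3 h1.2 h3.2 hc)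
  have d23 : j2 ≠ j3 := fun hc => h23 (child_eq v g2 g3 hZ2 hZ3 h2.2 h3.2 hc)
  -- key: no pair with gap ≥ 2
  have key : ∀ (g g' : NondecTuple a d) (hZ : (Z g).Nonempty) (hZ' : (Z g').Nonempty),
      pa g = v → pa g' = v → (i0 g hZ : ℕ) + 1 < (i0 g' hZ' : ℕ) → False := by
    intro g g' hZ hZ' hp hp' hlt
    have ha' : (i0 g hZ : ℕ) + 1 < a := lt_trans hlt (i0 g' hZ').2
    have hlt2 : (v.1 (i0 g hZ) : ℕ) < (v.1 ⟨(i0 g hZ : ℕ) + 1, ha'⟩ : ℕ) :=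
      child_lt v g hZ hp ha'
    have hz : (v.1 ⟨(i0 g hZ : ℕ) + 1, ha'⟩ : ℕ) = 0 :=
      child_zero v g' hZ' hp' _ (by rw [Fin.lt_def]; simpa using hlt)
    omega
  have hvals : (j1 : ℕ) ≠ j2 ∧ (j1 : ℕ) ≠ j3 ∧ (j2 : ℕ) ≠ j3 :=
    ⟨fun hc => d12 (Fin.ext hc), fun hc => d13 (Fin.ext hc), fun hc => d23 (Fin.ext hc)⟩
  have : ((j1 : ℕ) + 1 < j2) ∨ ((j1 : ℕ) + 1 < j3) ∨ ((j2 : ℕ) + 1 < j1) ∨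
      ((j2 : ℕ) + 1 < j3) ∨ ((j3 : ℕ) + 1 < j1) ∨ ((j3 : ℕ) + 1 < j2) := by omega
  rcases this with h | h | h | h | h | h
  · exact key g1 g2 hZ1 hZ2 h1.2 h2.2 h
  · exact key g1 g3 hZ1 hZ3 h1.2 h3.2 h
  · exact key g2 g1 hZ2 hZ1 h2.2 h1.2 h
  · exact key g2 g3 hZ2 hZ3 h2.2 h3.2 h
  · exact key g3 g1 hZ3 hZ1 h3.2 h1.2 h
  · exact key g3 g2 hZ3 hZ2 h3.2 h2.2 h

lemma degree_le (v : NondecTuple a d) : ((T a d).neighborSet v).ncard ≤ 3 := by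
  have hsub : (T a d).neighborSet v ⊆ insert (pa v) {g | mm g ≠ 0 ∧ pa g = v} := by
    rintro g (⟨hf, rfl⟩ | ⟨hg, hv⟩)
    · exact Set.mem_insert _ _
    · exact Set.mem_insert_of_mem _ ⟨hg, hv.symm⟩
  have hC : ({g | mm g ≠ 0 ∧ pa g = v} : Set (NondecTuple a d)).ncard ≤ 2 := by
    by_contra hc
    rw [not_le] at hc
    have := (Set.two_lt_ncard_iff (Set.toFinite _)).mp hc
    obtain ⟨g1, g2, g3, hg1, hg2, hg3, h12, h13, h23⟩ := this
    exact no_three_children v g1 g2 g3 hg1 hg2 hg3 h12 h13 h23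
  calc ((T a d).neighborSet v).ncard
      ≤ (insert (pa v) {g | mm g ≠ 0 ∧ pa g = v}).ncard :=
        Set.ncard_le_ncard hsub (Set.toFinite _)
    _ ≤ ({g | mm g ≠ 0 ∧ pa g = v} : Set (NondecTuple a d)).ncard + 1 :=
        Set.ncard_insert_le _ _
    _ ≤ 3 := by omega

/- ### Connectivity -/

lemma reach_root (hd : 1 ≤ d) (r : NondecTuple a d) (hr : ∀ i, (r.1 i : ℕ) = 0) :
    ∀ n (v : NondecTuple a d), mm v ≤ n → (T a d).Reachable v r := by
  intro n
  induction n with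
  | zero =>
    intro v hv
    have : v = r := by
      apply Subtype.ext; funext i
      apply Fin.ext
      rw [hr i]
      have : ∑ i, (v.1 i : ℕ) = 0 := le_antisymm hv (Nat.zero_le _)
      exact Finset.sum_eq_zero_iff.mp this i (Finset.mem_univ i)
    rw [this]
  | succ n ih =>
    intro v hv
    rcases eq_or_ne (mm v) 0 with h0 | h0
    · have : v = r := by
        apply Subtype.ext; funext i
        apply Fin.ext
        rw [hr i]
        exact Finset.sum_eq_zero_iff.mp h0 i (Finset.mem_univ i)
      rw [this]
    · have hZ := (mm_ne_zero_iff v).mp h0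
      have hadj : (T a d).Adj v (pa v) := Or.inl ⟨h0, rfl⟩
      have hm := mm_pa v hZ
      exact hadj.reachable.trans (ih (pa v) (by omega))

lemma connected (ha : 1 ≤ a) (hd : 1 ≤ d) : (T a d).Connected := by
  rw [SimpleGraph.connected_iff]
  refine ⟨fun u v => ?_, ⟨⟨fun _ => ⟨0, hd⟩, fun i j _ => le_refl _⟩⟩⟩
  have hr : ∀ i, (((⟨fun _ => ⟨0, hd⟩, fun i j _ => le_refl _⟩ : NondecTuple a d)).1 i : ℕ) = 0 :=
    fun _ => rfl
  exact (reach_root hd _ hr (mm u) u le_rfl).trans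
    (reach_root hd _ hr (mm v) v le_rfl).symm

/- ### Acyclicity -/

lemma mem_edges_getVert {V : Type*} {G : SimpleGraph V} {u v : V} (p : G.Walk u v) :
    ∀ {n : ℕ}, n < p.length → s(p.getVert n, p.getVert (n + 1)) ∈ p.edges := by
  induction p with
  | nil => intro n hn; simp at hn
  | cons h q ih =>
    intro n hn
    cases n with
    | zero =>
      rw [SimpleGraph.Walk.getVert_zero, SimpleGraph.Walk.getVert_cons_succ,
        SimpleGraph.Walk.getVert_zero, SimpleGraph.Walk.edges_cons]
      exact List.mem_cons_self
    | succ n =>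
      rw [SimpleGraph.Walk.getVert_cons_succ, SimpleGraph.Walk.getVert_cons_succ,
        SimpleGraph.Walk.edges_cons]
      exact List.mem_cons_of_mem _ (ih (by
        rw [SimpleGraph.Walk.length_cons] at hn; omega))

lemma acyclic : (T a d).IsAcyclic := by
  classical
  intro v c hc
  obtain ⟨u, hu⟩ : ∃ u, u ∈ c.support.argmax mm := by
    cases h : c.support.argmax mm with
    | none =>
      rw [List.argmax_eq_none] at h
      exact absurd h c.support_ne_nil
    | some u => exact ⟨u, Option.mem_def.mpr rfl⟩
  have hum : u ∈ c.support := List.argmax_mem hu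
  have hmax : ∀ x ∈ c.support, mm x ≤ mm u := fun x hx => List.le_of_mem_argmax hx hu
  have hc' : (c.rotate u hum).IsCycle := hc.rotate hum
  have hmemc : ∀ x ∈ (c.rotate u hum).support, mm x ≤ mm u := by
    intro x hx
    rw [SimpleGraph.Walk.support_eq_cons] at hx
    rcases List.mem_cons.mp hx with rfl | hx
    · exact le_rfl
    · have hperm := SimpleGraph.Walk.support_rotate c u hum
      exact hmax x (List.mem_of_mem_tail (hperm.mem_iff.mp hx))
  revert hc' hmemc
  generalize c.rotate u hum = c'
  intro hc' hmemc
  cases c' with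
  | nil => exact SimpleGraph.Walk.IsCycle.not_of_nil hc'
  | @cons _ w _ h q =>
    have hlen : 2 ≤ q.length := by
      have h3 := hc'.three_le_length
      rw [SimpleGraph.Walk.length_cons] at h3; omega
    rw [SimpleGraph.Walk.cons_isCycle_iff] at hc'
    obtain ⟨hq, hedge⟩ := hc'
    have hadjxu : (T a d).Adj (q.getVert (q.length - 1)) u := by
      have h2 := q.adj_getVert_succ (i := q.length - 1) (by omega)
      rwa [show q.length - 1 + 1 = q.length by omega, SimpleGraph.Walk.getVert_length] at h2
    have hxmem : q.getVert (q.length - 1) ∈ q.support :=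
      SimpleGraph.Walk.mem_support_iff_exists_getVert.mpr ⟨q.length - 1, rfl, by omega⟩
    have hmw : mm w ≤ mm u := by
      refine hmemc w ?_
      rw [SimpleGraph.Walk.support_cons]
      exact List.mem_cons_of_mem _ q.start_mem_support
    have hmx : mm (q.getVert (q.length - 1)) ≤ mm u := by
      refine hmemc _ ?_
      rw [SimpleGraph.Walk.support_cons]
      exact List.mem_cons_of_mem _ hxmem
    have hneq : w ≠ q.getVert (q.length - 1) := by
      intro hwx
      apply hedge
      have hlast : s(q.getVert (q.length - 1), q.getVert (q.length - 1 + 1)) ∈ q.edges :=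
        mem_edges_getVert q (by omega)
      rw [show q.length - 1 + 1 = q.length by omega, SimpleGraph.Walk.getVert_length] at hlast
      rw [← hwx] at hlast
      rwa [Sym2.eq_swap]
    have hwp : w = pa u := by
      have h' : (mm u ≠ 0 ∧ w = pa u) ∨ (mm w ≠ 0 ∧ u = pa w) := h
      rcases h' with ⟨hu0, hw⟩ | ⟨hw0, hupa⟩
      · exact hw
      · exfalso
        have hm := mm_pa w ((mm_ne_zero_iff w).mp hw0)
        rw [← hupa] at hm
        omega
    have hxp : q.getVert (q.length - 1) = pa u := by
      have h' : (mm (q.getVert (q.length - 1)) ≠ 0 ∧ u = pa (q.getVert (q.length - 1))) ∨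
          (mm u ≠ 0 ∧ q.getVert (q.length - 1) = pa u) := hadjxu
      rcases h' with ⟨hx0, hupa⟩ | ⟨hu0, hx⟩
      · exfalso
        have hm := mm_pa _ ((mm_ne_zero_iff _).mp hx0)
        rw [← hupa] at hm
        omega
      · exact hx
    exact hneq (hwp.trans hxp.symm)

end GadTree

/-- `G(a,d)` has a spanning tree of maximum degree at most 3. -/
theorem Gad_spanning_tree (a d : ℕ) (ha : 1 ≤ a) (hd : 1 ≤ d) :
    ∃ T : SimpleGraph (NondecTuple a d), T ≤ Gad a d ∧ T.IsTree ∧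
      ∀ v : NondecTuple a d, (T.neighborSet v).ncard ≤ 3 := by
  refine ⟨GadTree.T a d, GadTree.T_le, ⟨GadTree.connected ha hd, GadTree.acyclic⟩, GadTree.degree_le⟩
end

section
/- In the flip graph of (s,t)-combinations under adjacent transpositions with s,t ≥ 1, the two bipartition classes (strings with an even vs. odd number of inversions) have sizes differing by more than 1 whenever s and t are both even and s,t ≥ 2; hence no Hamilton path exists in that case. -/
/-- Two bitstrings are related by an adjacent transposition: they are obtained from one
another by swapping two adjacent positions carrying distinct bits. -/
def flipAdj (n : ℕ) (f g : Fin n → Bool) : Prop :=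
  ∃ i j : Fin n, (i : ℕ) + 1 = (j : ℕ) ∧ f i ≠ f j ∧ g i = f j ∧ g j = f i ∧
    ∀ k : Fin n, k ≠ i → k ≠ j → g k = f k

/-- The flip graph on all bitstrings of length `n`, with edges given by adjacent
transpositions of distinct bits. -/
def flipGraph (n : ℕ) : SimpleGraph (Fin n → Bool) where
  Adj := flipAdj n
  symm := by
    constructor
    rintro f g ⟨i, j, hij, hne, h1, h2, h3⟩
    refine ⟨i, j, hij, ?_, h2.symm, h1.symm, fun k hk1 hk2 => (h3 k hk1 hk2).symm⟩
    rw [h1, h2]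
    exact fun h => hne h.symm
  loopless := by
    constructor
    rintro f ⟨i, j, hij, hne, h1, h2, h3⟩
    exact hne h1

/-- The number of ones in a bitstring. -/
def onesCount {n : ℕ} (f : Fin n → Bool) : ℕ :=
  (Finset.univ.filter fun i => f i = true).card

/-- The flip graph of `(s,t)`-combinations: bitstrings of length `s+t` with exactly `s`
ones, adjacent iff they differ by an adjacent transposition of distinct bits. -/
def combGraph (s t : ℕ) : SimpleGraph {f : Fin (s + t) → Bool | onesCount f = s} :=
  SimpleGraph.induce {f : Fin (s + t) → Bool | onesCount f = s} (flipGraph (s + t))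

/-- The number of inversions of a bitstring: pairs of positions `i < j` with `f i = 1`
and `f j = 0`. -/
def invCount {n : ℕ} (f : Fin n → Bool) : ℕ :=
  (Finset.univ.filter fun p : Fin n × Fin n =>
    p.1 < p.2 ∧ f p.1 = true ∧ f p.2 = false).card

/-- A finset with a fixed-point-free involution has even cardinality. -/
lemma even_card_of_fpf_involution {α : Type*} [DecidableEq α] (s : Finset α) (σ : α → α)
    (hmem : ∀ a ∈ s, σ a ∈ s) (hinv : ∀ a ∈ s, σ (σ a) = a) (hfpf : ∀ a ∈ s, σ a ≠ a) :
    Even s.card := by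
  induction s using Finset.strongInduction with
  | _ s ih =>
    rcases s.eq_empty_or_nonempty with rfl | ⟨a, ha⟩
    · simp
    · have hsa : σ a ∈ s := hmem a ha
      have hne : σ a ≠ a := hfpf a ha
      set s' := (s.erase a).erase (σ a) with hs'
      have hss : s' ⊂ s := by
        refine Finset.ssubset_of_subset_of_ssubset ?_ (Finset.erase_ssubset ha)
        exact Finset.erase_subset _ _
      have hsub : ∀ x ∈ s', x ∈ s := fun x hx => Finset.mem_of_mem_erase (Finset.mem_of_mem_erase hx)
      have h1 : Even s'.card := by
        refine ih s' hss (fun x hx => ?_) (fun x hx => hinv x (hsub x hx)) (fun x hx => hfpf x (hsub x hx))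
        have hxs := hsub x hx
        have hxa : x ≠ a := by
          intro h; subst h
          exact (Finset.mem_erase.1 (Finset.mem_erase.1 hx).2).1 rfl
        have hxsa : x ≠ σ a := (Finset.mem_erase.1 hx).1
        refine Finset.mem_erase.2 ⟨?_, Finset.mem_erase.2 ⟨?_, hmem x hxs⟩⟩
        · intro h
          apply hxa
          have := hinv x hxs
          rw [h] at this
          rw [← this, hinv a ha]
        · intro h
          apply hxsa
          have := hinv x hxs
          rw [h] at this
          rw [← this]
      have hcard : s.card = s'.card + 2 := by
        rw [hs', Finset.card_erase_of_mem, Finset.card_erase_of_mem ha]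
        · have : 1 ≤ s.card := Finset.card_pos.2 ⟨a, ha⟩
          have h2 : 2 ≤ s.card := by
            have := Finset.one_lt_card.2 ⟨a, ha, σ a, hsa, hne.symm⟩
            omega
          omega
        · exact Finset.mem_erase.2 ⟨hne, hsa⟩
      rw [hcard]
      exact h1.add (even_two)

section Swap
variable {n : ℕ} (a b : Fin n) (f : Fin n → Bool)

lemma onesCount_comp_equiv (e : Fin n ≃ Fin n) : onesCount (f ∘ e) = onesCount f := by
  unfold onesCount
  apply Finset.card_bij (fun i _ => e i)
  · intro i hi
    simp only [Finset.mem_filter, Finset.mem_univ, true_and, Function.comp_apply] at hi ⊢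
    exact hi
  · intro i _ j _ h
    exact e.injective h
  · intro j hj
    refine ⟨e.symm j, ?_, by simp⟩
    simp only [Finset.mem_filter, Finset.mem_univ, true_and, Function.comp_apply, Equiv.apply_symm_apply] at hj ⊢
    exact hj

lemma swap_lt_swap (hab : (a : ℕ) + 1 = (b : ℕ)) {x y : Fin n} (hxy : x < y)
    (hne : ¬(x = a ∧ y = b)) : Equiv.swap a b x < Equiv.swap a b y := by
  rw [Fin.lt_def] at hxy
  by_cases hxa : x = a
  · have hyb : y ≠ b := fun h => hne ⟨hxa, h⟩
    have hxa' : (x : ℕ) = (a : ℕ) := by rw [hxa]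
    have hya : y ≠ a := by
      intro h
      have : (y : ℕ) = (a : ℕ) := by rw [h]
      omega
    rw [hxa, Equiv.swap_apply_left, Equiv.swap_apply_of_ne_of_ne hya hyb, Fin.lt_def]
    have hyb' : (y : ℕ) ≠ (b : ℕ) := fun h => hyb (Fin.ext h)
    omega
  · by_cases hxb : x = b
    · have hxb' : (x : ℕ) = (b : ℕ) := by rw [hxb]
      have hya : y ≠ a := by
        intro h
        have : (y : ℕ) = (a : ℕ) := by rw [h]
        omega
      have hyb : y ≠ b := by
        intro h
        have : (y : ℕ) = (b : ℕ) := by rw [h]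
        omega
      rw [hxb, Equiv.swap_apply_right, Equiv.swap_apply_of_ne_of_ne hya hyb, Fin.lt_def]
      omega
    · have hxa' : (x : ℕ) ≠ (a : ℕ) := fun h => hxa (Fin.ext h)
      have hxb' : (x : ℕ) ≠ (b : ℕ) := fun h => hxb (Fin.ext h)
      rw [Equiv.swap_apply_of_ne_of_ne hxa hxb]
      by_cases hya : y = a
      · rw [hya, Equiv.swap_apply_left, Fin.lt_def]
        have : (y : ℕ) = (a : ℕ) := by rw [hya]
        omega
      · by_cases hyb : y = b
        · rw [hyb, Equiv.swap_apply_right, Fin.lt_def]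
          have : (y : ℕ) = (b : ℕ) := by rw [hyb]
          omega
        · rw [Equiv.swap_apply_of_ne_of_ne hya hyb, Fin.lt_def]
          omega

lemma invMem_swap (hab : (a : ℕ) + 1 = (b : ℕ)) (hfab : f a ≠ f b)
    {p : Fin n × Fin n}
    (hp : p ∈ (Finset.univ.filter fun p : Fin n × Fin n =>
      p.1 < p.2 ∧ f p.1 = true ∧ f p.2 = false).erase (a, b)) :
    (Equiv.swap a b p.1, Equiv.swap a b p.2) ∈
      (Finset.univ.filter fun p : Fin n × Fin n =>
        p.1 < p.2 ∧ (f ∘ Equiv.swap a b) p.1 = true ∧ (f ∘ Equiv.swap a b) p.2 = false).erase (a, b) := by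
  rw [Finset.mem_erase, Finset.mem_filter] at hp ⊢
  obtain ⟨hne, -, h1, h2, h3⟩ := hp
  have hab' : a < b := by rw [Fin.lt_def]; omega
  refine ⟨?_, Finset.mem_univ _, ?_, ?_, ?_⟩
  · intro h
    have e1 : Equiv.swap a b p.1 = a := congrArg Prod.fst h
    have e2 : Equiv.swap a b p.2 = b := congrArg Prod.snd h
    have hb1 : p.1 = b := by
      have := congrArg (Equiv.swap a b) e1
      rwa [Equiv.swap_apply_self, Equiv.swap_apply_left] at this
    have ha2 : p.2 = a := by
      have := congrArg (Equiv.swap a b) e2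
      rwa [Equiv.swap_apply_self, Equiv.swap_apply_right] at this
    rw [hb1, ha2] at h1
    exact absurd (h1.trans hab') (lt_irrefl _)
  · apply swap_lt_swap a b hab h1
    rintro ⟨rfl, rfl⟩
    exact hne rfl
  · simpa [Function.comp, Equiv.swap_apply_self] using h2
  · simpa [Function.comp, Equiv.swap_apply_self] using h3

lemma invCount_add_odd (hab : (a : ℕ) + 1 = (b : ℕ)) (hfab : f a ≠ f b) :
    ¬ Even (invCount f + invCount (f ∘ Equiv.swap a b)) := by
  classical
  set g := f ∘ Equiv.swap a b with hg
  set F := Finset.univ.filter fun p : Fin n × Fin n => p.1 < p.2 ∧ f p.1 = true ∧ f p.2 = false with hF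
  set G := Finset.univ.filter fun p : Fin n × Fin n => p.1 < p.2 ∧ g p.1 = true ∧ g p.2 = false with hG
  have hgab : g a ≠ g b := by
    simp only [hg, Function.comp_apply, Equiv.swap_apply_left, Equiv.swap_apply_right]
    exact fun h => hfab h.symm
  have hfg : f = g ∘ Equiv.swap a b := by
    funext x
    simp [hg, Equiv.swap_apply_self]
  have hcard : (F.erase (a, b)).card = (G.erase (a, b)).card := by
    apply Finset.card_bij' (fun p _ => (Equiv.swap a b p.1, Equiv.swap a b p.2))
      (fun p _ => (Equiv.swap a b p.1, Equiv.swap a b p.2))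
    · intro p hp
      exact invMem_swap a b f hab hfab hp
    · intro p hp
      have h2 := invMem_swap a b g hab hgab (p := p) hp
      rwa [← hfg] at h2
    · intro p _; simp [Equiv.swap_apply_self]
    · intro p _; simp [Equiv.swap_apply_self]
  have hab' : a < b := by rw [Fin.lt_def]; omega
  have hmemF : (a, b) ∈ F ↔ (f a = true ∧ f b = false) := by
    simp [hF, hab']
  have hmemG : (a, b) ∈ G ↔ (f b = true ∧ f a = false) := by
    simp [hG, hg, hab', Equiv.swap_apply_left, Equiv.swap_apply_right]
  have hxor : ((a, b) ∈ F ∧ (a, b) ∉ G) ∨ ((a, b) ∉ F ∧ (a, b) ∈ G) := by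
    rcases Bool.eq_false_or_eq_true (f a) with ha | ha <;>
      rcases Bool.eq_false_or_eq_true (f b) with hb | hb
    · exact absurd (ha.trans hb.symm) hfab
    · left
      refine ⟨hmemF.2 ⟨ha, hb⟩, fun hm => ?_⟩
      rw [hmemG] at hm
      rw [hb] at hm
      exact Bool.false_ne_true hm.1
    · right
      refine ⟨fun hm => ?_, hmemG.2 ⟨hb, ha⟩⟩
      rw [hmemF] at hm
      rw [ha] at hm
      exact Bool.false_ne_true hm.1
    · exact absurd (ha.trans hb.symm) hfab
  have hFc : F.card = (F.erase (a,b)).card + (if (a,b) ∈ F then 1 else 0) := by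
    by_cases h : (a,b) ∈ F
    · rw [if_pos h, Finset.card_erase_of_mem h]
      have := Finset.card_pos.2 ⟨_, h⟩; omega
    · rw [if_neg h, Finset.erase_eq_of_notMem h]
      omega
  have hGc : G.card = (G.erase (a,b)).card + (if (a,b) ∈ G then 1 else 0) := by
    by_cases h : (a,b) ∈ G
    · rw [if_pos h, Finset.card_erase_of_mem h]
      have := Finset.card_pos.2 ⟨_, h⟩; omega
    · rw [if_neg h, Finset.erase_eq_of_notMem h]
      omega
  show ¬ Even (F.card + G.card)
  rcases hxor with ⟨h1, h2⟩ | ⟨h1, h2⟩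
  · rw [hFc, hGc, if_pos h1, if_neg h2, hcard, Nat.even_iff]
    omega
  · rw [hFc, hGc, if_neg h1, if_pos h2, hcard, Nat.even_iff]
    omega

end Swap

section Doubled
variable {n : ℕ}

/-- Extension of a bitstring to all of `ℕ` by `false`. -/
def fext (f : Fin n → Bool) : ℕ → Bool := fun j => if h : j < n then f ⟨j, h⟩ else false

/-- `i` is a bad position: an even position whose block `{i, i+1}` carries distinct bits. -/
def isBad (f : Fin n → Bool) (i : ℕ) : Prop :=
  i + 1 < n ∧ i % 2 = 0 ∧ fext f i ≠ fext f (i + 1)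

instance (f : Fin n → Bool) (i : ℕ) : Decidable (isBad f i) := by
  unfold isBad; infer_instance

instance (f : Fin n → Bool) : Decidable (∃ i, isBad f i) :=
  decidable_of_iff (∃ i < n, isBad f i)
    ⟨fun ⟨i, _, h⟩ => ⟨i, h⟩, fun ⟨i, h⟩ => ⟨i, by have := h.1; omega, h⟩⟩

lemma fext_eq (f : Fin n → Bool) {i : ℕ} (h : i < n) : fext f i = f ⟨i, h⟩ := dif_pos h

/-- the partner of a position within its block -/
def prNat (j : ℕ) : ℕ := if j % 2 = 0 then j + 1 else j - 1

lemma prNat_lt (hn : n % 2 = 0) {j : ℕ} (hj : j < n) : prNat j < n := by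
  unfold prNat; split <;> omega

lemma prNat_prNat (j : ℕ) : prNat (prNat j) = j := by
  unfold prNat; split <;> split <;> omega

lemma prNat_ne (j : ℕ) : prNat j ≠ j := by
  unfold prNat; split <;> omega

lemma not_bad_pairs (f : Fin n → Bool) (h : ∀ i, ¬ isBad f i) {i : ℕ} (h1 : i + 1 < n)
    (h2 : i % 2 = 0) : f ⟨i, by omega⟩ = f ⟨i + 1, h1⟩ := by
  have := h i
  unfold isBad at this
  push_neg at this
  have h3 := this h1 h2
  rwa [fext_eq f (by omega : i < n), fext_eq f h1] at h3

lemma doubled_val (hn : n % 2 = 0) (f : Fin n → Bool) (h : ∀ i, ¬ isBad f i) (j : Fin n) :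
    f ⟨prNat j, prNat_lt hn j.2⟩ = f j := by
  rcases Nat.even_or_odd (j : ℕ) with hj | hj
  · have hj2 : (j : ℕ) % 2 = 0 := Nat.even_iff.1 hj
    have hlt : (j : ℕ) + 1 < n := by omega
    have := not_bad_pairs f h hlt hj2
    have hpr : prNat (j : ℕ) = (j : ℕ) + 1 := if_pos hj2
    rw [show (⟨prNat j, prNat_lt hn j.2⟩ : Fin n) = ⟨(j : ℕ) + 1, hlt⟩ from Fin.ext hpr]
    rw [← this]
  · have hj2 : (j : ℕ) % 2 = 1 := Nat.odd_iff.1 hj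
    have hpr : prNat (j : ℕ) = (j : ℕ) - 1 := if_neg (by omega)
    have hlt : ((j : ℕ) - 1) + 1 < n := by have := j.2; omega
    have := not_bad_pairs f h hlt (by omega)
    rw [show (⟨prNat j, prNat_lt hn j.2⟩ : Fin n) = ⟨(j : ℕ) - 1, by omega⟩ from Fin.ext hpr]
    rw [this]
    rw [show (⟨(j : ℕ) - 1 + 1, hlt⟩ : Fin n) = j from Fin.ext (by show (j : ℕ) - 1 + 1 = (j : ℕ); omega)]

lemma even_invCount_of_doubled (hn : n % 2 = 0) (f : Fin n → Bool)
    (h : ¬ ∃ i, isBad f i) : Even (invCount f) := by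
  push_neg at h
  set pr : Fin n → Fin n := fun j => ⟨prNat j, prNat_lt hn j.2⟩ with hpr
  apply even_card_of_fpf_involution _ (fun p => (p.1, pr p.2))
  · rintro ⟨x, y⟩ hx
    rw [Finset.mem_filter] at hx ⊢
    obtain ⟨-, h1, h2, h3⟩ := hx
    dsimp only at h1 h2 h3 ⊢
    refine ⟨Finset.mem_univ _, ?_, h2, ?_⟩
    · show x < pr y
      rw [Fin.lt_def] at h1 ⊢
      show (x : ℕ) < prNat y
      have hxy : (x : ℕ) ≠ prNat (y : ℕ) := by
        intro hcontra
        have hx' : x = pr y := Fin.ext hcontra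
        have hval : f (pr y) = f y := doubled_val hn f h y
        rw [← hx', h2, h3] at hval
        simp at hval
      unfold prNat at hxy ⊢
      split at hxy <;> split <;> omega
    · show f (pr y) = false
      rw [← h3]
      exact doubled_val hn f h y
  · rintro ⟨x, y⟩ _
    show (x, pr (pr y)) = (x, y)
    have hy : pr (pr y) = y := Fin.ext (prNat_prNat y)
    rw [hy]
  · rintro ⟨x, y⟩ _
    intro hc
    have h2 : pr y = y := congrArg Prod.snd hc
    exact prNat_ne (y : ℕ) (congrArg Fin.val h2)

end Doubled

section FlipT
variable {n : ℕ}

lemma isBad_iff (f : Fin n → Bool) (i : ℕ) (h1 : i + 1 < n) :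
    isBad f i ↔ (i % 2 = 0 ∧ f ⟨i, by omega⟩ ≠ f ⟨i + 1, h1⟩) := by
  unfold isBad
  rw [fext_eq f (show i < n by omega), fext_eq f h1]
  tauto

/-- The swap-first-bad-block map. -/
def flipT (f : Fin n → Bool) : Fin n → Bool :=
  if h : ∃ i, isBad f i then
    f ∘ Equiv.swap ⟨Nat.find h, by have := (Nat.find_spec h).1; omega⟩
      ⟨Nat.find h + 1, (Nat.find_spec h).1⟩
  else f

lemma flipT_eq (f : Fin n → Bool) (h : ∃ i, isBad f i) :
    flipT f = f ∘ Equiv.swap ⟨Nat.find h, by have := (Nat.find_spec h).1; omega⟩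
      ⟨Nat.find h + 1, (Nat.find_spec h).1⟩ := by
  rw [flipT, dif_pos h]

lemma find_ne (f : Fin n → Bool) (h : ∃ i, isBad f i) :
    f ⟨Nat.find h, by have := (Nat.find_spec h).1; omega⟩
      ≠ f ⟨Nat.find h + 1, (Nat.find_spec h).1⟩ :=
  ((isBad_iff f _ (Nat.find_spec h).1).1 (Nat.find_spec h)).2

lemma flipT_parity (f : Fin n → Bool) (h : ∃ i, isBad f i) :
    ¬ Even (invCount f + invCount (flipT f)) := by
  rw [flipT_eq f h]
  exact invCount_add_odd _ _ f rfl (find_ne f h)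

lemma flipT_onesCount (f : Fin n → Bool) : onesCount (flipT f) = onesCount f := by
  by_cases h : ∃ i, isBad f i
  · rw [flipT_eq f h]
    exact onesCount_comp_equiv f _
  · rw [flipT, dif_neg h]

lemma flipT_isBad_iff (f : Fin n → Bool) (h : ∃ i, isBad f i) (i : ℕ) :
    isBad (flipT f) i ↔ isBad f i := by
  have hk1 : Nat.find h + 1 < n := (Nat.find_spec h).1
  have hk2 : Nat.find h % 2 = 0 := ((isBad_iff f _ hk1).1 (Nat.find_spec h)).1
  have hg : ∀ x : Fin n, flipT f x
      = f (Equiv.swap (⟨Nat.find h, by omega⟩ : Fin n) ⟨Nat.find h + 1, hk1⟩ x) := by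
    intro x; rw [flipT_eq f h]; rfl
  by_cases hin : i + 1 < n
  · rw [isBad_iff _ i hin, isBad_iff f i hin]
    by_cases hik : i = Nat.find h
    · have eia : (⟨i, by omega⟩ : Fin n) = (⟨Nat.find h, by omega⟩ : Fin n) := Fin.ext hik
      have eib : (⟨i + 1, hin⟩ : Fin n) = (⟨Nat.find h + 1, hk1⟩ : Fin n) :=
        Fin.ext (by simp [hik])
      have e1 : flipT f ⟨i, by omega⟩ = f ⟨i + 1, hin⟩ := by
        rw [hg, eia, Equiv.swap_apply_left, ← eib]
      have e2 : flipT f ⟨i + 1, hin⟩ = f ⟨i, by omega⟩ := by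
        rw [hg, eib, Equiv.swap_apply_right, ← eia]
      rw [e1, e2]
      constructor
      · rintro ⟨u, w⟩; exact ⟨u, fun hc => w hc.symm⟩
      · rintro ⟨u, w⟩; exact ⟨u, fun hc => w hc.symm⟩
    · by_cases hpar : i % 2 = 0
      · have hi1 : (⟨i, by omega⟩ : Fin n) ≠ (⟨Nat.find h, by omega⟩ : Fin n) := by
          intro hc; simp only [Fin.mk.injEq] at hc; omega
        have hi2 : (⟨i, by omega⟩ : Fin n) ≠ (⟨Nat.find h + 1, hk1⟩ : Fin n) := by
          intro hc; simp only [Fin.mk.injEq] at hc; omega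
        have hj1 : (⟨i + 1, hin⟩ : Fin n) ≠ (⟨Nat.find h, by omega⟩ : Fin n) := by
          intro hc; simp only [Fin.mk.injEq] at hc; omega
        have hj2 : (⟨i + 1, hin⟩ : Fin n) ≠ (⟨Nat.find h + 1, hk1⟩ : Fin n) := by
          intro hc; simp only [Fin.mk.injEq] at hc; omega
        rw [hg, hg, Equiv.swap_apply_of_ne_of_ne hi1 hi2, Equiv.swap_apply_of_ne_of_ne hj1 hj2]
      · constructor
        · rintro ⟨u, -⟩; omega
        · rintro ⟨u, -⟩; omega
  · constructor
    · rintro ⟨u, -⟩; omega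
    · rintro ⟨u, -⟩; omega

end FlipT

section FlipT2
variable {n : ℕ}

lemma flipT_bad (f : Fin n → Bool) (h : ∃ i, isBad f i) : ∃ i, isBad (flipT f) i :=
  ⟨Nat.find h, (flipT_isBad_iff f h _).2 (Nat.find_spec h)⟩

lemma flipT_flipT (f : Fin n → Bool) (h : ∃ i, isBad f i) : flipT (flipT f) = f := by
  have h' := flipT_bad f h
  have hfind : Nat.find h' = Nat.find h := by
    rw [Nat.find_eq_iff]
    refine ⟨(flipT_isBad_iff f h _).2 (Nat.find_spec h), fun m hm hc => ?_⟩
    exact Nat.find_min h hm ((flipT_isBad_iff f h m).1 hc)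
  have ex : (⟨Nat.find h', by have := (Nat.find_spec h').1; omega⟩ : Fin n)
      = (⟨Nat.find h, by have := (Nat.find_spec h).1; omega⟩ : Fin n) := Fin.ext hfind
  have ey : (⟨Nat.find h' + 1, (Nat.find_spec h').1⟩ : Fin n)
      = (⟨Nat.find h + 1, (Nat.find_spec h).1⟩ : Fin n) := Fin.ext (by simp [hfind])
  rw [flipT_eq (flipT f) h', ex, ey]
  funext x
  simp only [Function.comp_apply]
  have hg2 : ∀ y : Fin n, flipT f y
      = f (Equiv.swap (⟨Nat.find h, by have := (Nat.find_spec h).1; omega⟩ : Fin n)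
          ⟨Nat.find h + 1, (Nat.find_spec h).1⟩ y) := by
    intro y; exact congrFun (flipT_eq f h) y
  rw [hg2, Equiv.swap_apply_self]

end FlipT2

section Counting

lemma card_filter_fin_eq (n : ℕ) (p : ℕ → Prop) [DecidablePred p] :
    (Finset.univ.filter fun i : Fin n => p (i : ℕ)).card = ((Finset.range n).filter p).card := by
  have himg : ((Finset.range n).filter p)
      = (Finset.univ.filter fun i : Fin n => p (i : ℕ)).image Fin.val := by
    ext a
    simp only [Finset.mem_filter, Finset.mem_range, Finset.mem_image, Finset.mem_univ, true_and]
    constructor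
    · rintro ⟨ha, hpa⟩; exact ⟨⟨a, ha⟩, hpa, rfl⟩
    · rintro ⟨i, hpi, rfl⟩; exact ⟨i.2, hpi⟩
  rw [himg, Finset.card_image_of_injective _ Fin.val_injective]

variable (s t : ℕ)

/-- `s` ones followed by `t` zeros. -/
def dOne : Fin (s + t) → Bool := fun i => decide ((i : ℕ) < s)

/-- like `dOne` but with the last block of ones moved right by one block. -/
def dTwo : Fin (s + t) → Bool :=
  fun i => decide ((i : ℕ) < s - 2 ∨ (i : ℕ) = s ∨ (i : ℕ) = s + 1)

lemma onesCount_dOne (ht1 : 1 ≤ t) : onesCount (dOne s t) = s := by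
  unfold onesCount dOne
  simp only [decide_eq_true_eq]
  rw [card_filter_fin_eq (s + t) (fun i => i < s)]
  rw [show (Finset.range (s + t)).filter (fun i => i < s) = Finset.range s from by
    ext a; simp only [Finset.mem_filter, Finset.mem_range]; omega]
  exact Finset.card_range s

lemma onesCount_dTwo (hs2 : 2 ≤ s) (ht2 : 2 ≤ t) : onesCount (dTwo s t) = s := by
  unfold onesCount dTwo
  simp only [decide_eq_true_eq]
  rw [card_filter_fin_eq (s + t) (fun i => i < s - 2 ∨ i = s ∨ i = s + 1)]
  rw [show (Finset.range (s + t)).filter (fun i => i < s - 2 ∨ i = s ∨ i = s + 1)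
      = Finset.range (s - 2) ∪ {s, s + 1} from by
    ext a
    simp only [Finset.mem_filter, Finset.mem_range, Finset.mem_union, Finset.mem_insert,
      Finset.mem_singleton]
    omega]
  rw [Finset.card_union_of_disjoint (by
    simp only [Finset.disjoint_left, Finset.mem_range, Finset.mem_insert, Finset.mem_singleton]
    omega)]
  rw [Finset.card_range]
  rw [show ({s, s + 1} : Finset ℕ).card = 2 from by
    rw [Finset.card_insert_of_notMem (by simp), Finset.card_singleton]]
  omega

lemma dOne_ne_dTwo (hs2 : 2 ≤ s) (ht2 : 2 ≤ t) : dOne s t ≠ dTwo s t := by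
  intro hc
  have hc2 := congrFun hc ⟨s, by omega⟩
  unfold dOne dTwo at hc2
  rw [decide_eq_decide] at hc2
  rw [show ((⟨s, by omega⟩ : Fin (s + t)) : ℕ) = s from rfl] at hc2
  omega

lemma dOne_not_bad (hs : s % 2 = 0) : ¬ ∃ i, isBad (dOne s t) i := by
  rintro ⟨i, hi⟩
  rw [isBad_iff _ _ hi.1] at hi
  obtain ⟨h2, h3⟩ := hi
  apply h3
  show decide (i < s) = decide (i + 1 < s)
  rw [decide_eq_decide]
  omega

lemma dTwo_not_bad (hs : s % 2 = 0) : ¬ ∃ i, isBad (dTwo s t) i := by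
  rintro ⟨i, hi⟩
  rw [isBad_iff _ _ hi.1] at hi
  obtain ⟨h2, h3⟩ := hi
  apply h3
  show decide (i < s - 2 ∨ i = s ∨ i = s + 1) = decide (i + 1 < s - 2 ∨ i + 1 = s ∨ i + 1 = s + 1)
  rw [decide_eq_decide]
  omega

end Counting

lemma class_imbalance (s t : ℕ) (hs : s % 2 = 0) (ht : t % 2 = 0) (hs2 : 2 ≤ s) (ht2 : 2 ≤ t) :
    (Finset.univ.filter fun f : Fin (s + t) → Bool =>
        onesCount f = s ∧ ¬ Even (invCount f)).card + 2
      ≤ (Finset.univ.filter fun f : Fin (s + t) → Bool =>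
        onesCount f = s ∧ Even (invCount f)).card := by
  classical
  set A := Finset.univ.filter fun f : Fin (s + t) → Bool =>
    onesCount f = s ∧ Even (invCount f) with hA
  set B := Finset.univ.filter fun f : Fin (s + t) → Bool =>
    onesCount f = s ∧ ¬ Even (invCount f) with hB
  have hn : (s + t) % 2 = 0 := by omega
  have hd1A : dOne s t ∈ A := by
    rw [hA, Finset.mem_filter]
    exact ⟨Finset.mem_univ _, onesCount_dOne s t (by omega),
      even_invCount_of_doubled hn _ (dOne_not_bad s t hs)⟩
  have hd2A : dTwo s t ∈ A := by
    rw [hA, Finset.mem_filter]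
    exact ⟨Finset.mem_univ _, onesCount_dTwo s t hs2 ht2,
      even_invCount_of_doubled hn _ (dTwo_not_bad s t hs)⟩
  have hBbad : ∀ f ∈ B, ∃ i, isBad f i := by
    intro f hf
    rw [hB, Finset.mem_filter] at hf
    by_contra hc
    exact hf.2.2 (even_invCount_of_doubled hn f hc)
  have hinj : Set.InjOn (flipT (n := s + t)) ↑B := by
    intro f1 h1 f2 h2 heq
    have := flipT_flipT f1 (hBbad f1 h1)
    rw [← this, heq, flipT_flipT f2 (hBbad f2 h2)]
  have hmaps : ∀ f ∈ B, flipT f ∈ (A.erase (dTwo s t)).erase (dOne s t) := by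
    intro f hf
    have hbad := hBbad f hf
    rw [hB, Finset.mem_filter] at hf
    have hTbad := flipT_bad f hbad
    refine Finset.mem_erase.2 ⟨?_, Finset.mem_erase.2 ⟨?_, ?_⟩⟩
    · intro hc
      exact dOne_not_bad s t hs (hc ▸ hTbad)
    · intro hc
      exact dTwo_not_bad s t hs (hc ▸ hTbad)
    · rw [hA, Finset.mem_filter]
      refine ⟨Finset.mem_univ _, ?_, ?_⟩
      · rw [flipT_onesCount]; exact hf.2.1
      · have hp := flipT_parity f hbad
        rcases Nat.even_or_odd (invCount (flipT f)) with h | h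
        · exact h
        · exfalso
          apply hp
          rcases Nat.odd_iff.1 h with h'
          rcases (Nat.not_even_iff.1 hf.2.2) with h''
          rw [Nat.even_iff]
          omega
  have hle : B.card ≤ ((A.erase (dTwo s t)).erase (dOne s t)).card :=
    Finset.card_le_card_of_injOn flipT hmaps hinj
  have hd2' : dOne s t ∈ A.erase (dTwo s t) :=
    Finset.mem_erase.2 ⟨dOne_ne_dTwo s t hs2 ht2, hd1A⟩
  rw [Finset.card_erase_of_mem hd2', Finset.card_erase_of_mem hd2A] at hle
  have h2A : 2 ≤ A.card := Finset.one_lt_card.2 ⟨_, hd1A, _, hd2A, dOne_ne_dTwo s t hs2 ht2⟩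
  omega

section PartB

lemma alt_count : ∀ (l : List Bool) (b : Bool), List.Chain' (· ≠ ·) (b :: l) →
    (b :: l).count (!b) ≤ (b :: l).count b ∧ (b :: l).count b ≤ (b :: l).count (!b) + 1 := by
  intro l
  induction l with
  | nil => intro b _; cases b <;> simp
  | cons c l' ih =>
    intro b hchain
    simp only [List.Chain', List.isChain_cons_cons] at hchain
    obtain ⟨hbc, htail⟩ := hchain
    have hc : c = !b := by cases b <;> cases c <;> simp_all
    subst hc
    have ihh := ih (!b) htail
    rw [Bool.not_not] at ihh
    simp only [List.count_cons] at ihh ⊢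
    cases b <;> simp_all <;> omega

lemma flipAdj_parity {n : ℕ} {f g : Fin n → Bool}
    (h : ∃ i j : Fin n, (i : ℕ) + 1 = (j : ℕ) ∧ f i ≠ f j ∧ g i = f j ∧ g j = f i ∧
      ∀ k : Fin n, k ≠ i → k ≠ j → g k = f k) :
    ¬ Even (invCount f + invCount g) := by
  obtain ⟨i, j, hij, hne, h1, h2, h3⟩ := h
  have hge : g = f ∘ Equiv.swap i j := by
    funext x
    by_cases hxi : x = i
    · subst hxi
      simp only [Function.comp_apply, Equiv.swap_apply_left]
      exact h1
    · by_cases hxj : x = j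
      · subst hxj
        simp only [Function.comp_apply, Equiv.swap_apply_right]
        exact h2
      · simp only [Function.comp_apply, Equiv.swap_apply_of_ne_of_ne hxi hxj]
        exact h3 x hxi hxj
  rw [hge]
  exact invCount_add_odd i j f hij hne

lemma count_eq_filter_card {α : Type*} [DecidableEq α] [Fintype α] (L : List α)
    (hnodup : L.Nodup) (hall : ∀ x, x ∈ L) (q : α → Prop) [DecidablePred q] :
    L.countP (fun x => decide (q x)) = (Finset.univ.filter q).card := by
  rw [List.countP_eq_length_filter]
  rw [← List.toFinset_card_of_nodup (hnodup.filter _)]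
  rw [List.toFinset_filter]
  have huniv : L.toFinset = Finset.univ := by
    apply Finset.eq_univ_iff_forall.2
    intro x
    rw [List.mem_toFinset]
    exact hall x
  rw [huniv]
  congr 1
  apply Finset.filter_congr
  intro x _
  simp

end PartB

lemma card_subtype_filter {α : Type*} [Fintype α] [DecidableEq α] (P Q : α → Prop)
    [DecidablePred P] [DecidablePred Q] [Fintype {a : α | P a}] :
    (Finset.univ.filter fun x : {a : α | P a} => Q x.val).card
      = (Finset.univ.filter fun a : α => P a ∧ Q a).card := by
  apply Finset.card_bij (fun x _ => x.val)
  · intro x hx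
    simp only [Finset.mem_filter, Finset.mem_univ, true_and] at hx ⊢
    exact ⟨x.2, hx⟩
  · intro x _ y _ h
    exact Subtype.ext h
  · intro a ha
    simp only [Finset.mem_filter, Finset.mem_univ, true_and] at ha
    exact ⟨⟨a, ha.1⟩, by simp only [Finset.mem_filter, Finset.mem_univ, true_and]; exact ha.2, rfl⟩


/-- If `s` and `t` are both even with `s, t ≥ 2`, then the two bipartition classes of the
flip graph of `(s,t)`-combinations (strings with an even vs. odd number of inversions)
have sizes differing by more than 1; hence the graph has no Hamilton path. -/
theorem combGraph_unbalanced_no_hamiltonian_path (s t : ℕ)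
    (hs : Even s) (ht : Even t) (hs2 : 2 ≤ s) (ht2 : 2 ≤ t) :
    (Nat.card {f : Fin (s + t) → Bool // onesCount f = s ∧ Even (invCount f)} + 1 <
        Nat.card {f : Fin (s + t) → Bool // onesCount f = s ∧ ¬ Even (invCount f)} ∨
      Nat.card {f : Fin (s + t) → Bool // onesCount f = s ∧ ¬ Even (invCount f)} + 1 <
        Nat.card {f : Fin (s + t) → Bool // onesCount f = s ∧ Even (invCount f)}) ∧
    ¬ ∃ (u v : {f : Fin (s + t) → Bool | onesCount f = s})
        (p : (combGraph s t).Walk u v), p.IsHamiltonian := by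
  classical
  have hs' : s % 2 = 0 := Nat.even_iff.1 hs
  have ht' : t % 2 = 0 := Nat.even_iff.1 ht
  have himb := class_imbalance s t hs' ht' hs2 ht2
  have hENat : Nat.card {f : Fin (s + t) → Bool // onesCount f = s ∧ Even (invCount f)}
      = (Finset.univ.filter fun f : Fin (s + t) → Bool =>
          onesCount f = s ∧ Even (invCount f)).card := by
    rw [Nat.card_eq_fintype_card, Fintype.card_subtype]
  have hONat : Nat.card {f : Fin (s + t) → Bool // onesCount f = s ∧ ¬ Even (invCount f)}
      = (Finset.univ.filter fun f : Fin (s + t) → Bool =>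
          onesCount f = s ∧ ¬ Even (invCount f)).card := by
    rw [Nat.card_eq_fintype_card, Fintype.card_subtype]
  refine ⟨Or.inr (by rw [hENat, hONat]; omega), ?_⟩
  rintro ⟨u, v, p, hp⟩
  set c : {f : Fin (s + t) → Bool | onesCount f = s} → Bool :=
    fun x => decide (Even (invCount x.val)) with hc
  have hflip : ∀ x y, (combGraph s t).Adj x y → c x ≠ c y := by
    intro x y hadj hceq
    rw [hc] at hceq
    simp only [decide_eq_decide] at hceq
    have hpar : ¬ Even (invCount x.val + invCount y.val) := flipAdj_parity hadj
    apply hpar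
    rw [Nat.even_add]
    exact hceq
  have hchain : List.Chain' (fun a b : Bool => a ≠ b) (p.support.map c) := by
    simp only [List.Chain', List.isChain_map]
    exact List.IsChain.imp (fun a b h => hflip a b h) p.isChain_adj_support
  have hnodup : p.support.Nodup := hp.isPath.support_nodup
  have hall : ∀ x, x ∈ p.support := fun x => hp.mem_support x
  have hTrue : (p.support.map c).count true
      = (Finset.univ.filter fun x : {f : Fin (s + t) → Bool | onesCount f = s} =>
          Even (invCount x.val)).card := by
    rw [List.count_eq_countP, List.countP_map]
    rw [show ((fun a => a == true) ∘ c) = (fun x => decide (Even (invCount x.val))) from by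
      funext x; simp [hc]]
    exact count_eq_filter_card _ hnodup hall _
  have hFalse : (p.support.map c).count false
      = (Finset.univ.filter fun x : {f : Fin (s + t) → Bool | onesCount f = s} =>
          ¬ Even (invCount x.val)).card := by
    rw [List.count_eq_countP, List.countP_map]
    rw [show ((fun a => a == false) ∘ c) = (fun x => decide (¬ Even (invCount x.val))) from by
      funext x; by_cases h : Even (invCount x.val) <;> simp [hc, h]]
    exact count_eq_filter_card _ hnodup hall _
  have hTA : (Finset.univ.filter fun x : {f : Fin (s + t) → Bool | onesCount f = s} =>
      Even (invCount x.val)).card = (Finset.univ.filter fun f : Fin (s + t) → Bool =>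
        onesCount f = s ∧ Even (invCount f)).card :=
    card_subtype_filter (fun f => onesCount f = s) (fun f => Even (invCount f))
  have hFB : (Finset.univ.filter fun x : {f : Fin (s + t) → Bool | onesCount f = s} =>
      ¬ Even (invCount x.val)).card = (Finset.univ.filter fun f : Fin (s + t) → Bool =>
        onesCount f = s ∧ ¬ Even (invCount f)).card :=
    card_subtype_filter (fun f => onesCount f = s) (fun f => ¬ Even (invCount f))
  -- now use the alternating count lemma
  rcases hml : p.support.map c with - | ⟨b, l⟩
  · have := p.support_ne_nil
    simp only [List.map_eq_nil_iff] at hml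
    exact this hml
  · have halt := alt_count l b (hml ▸ hchain)
    rw [hml] at hTrue hFalse
    rw [hTA] at hTrue
    rw [hFB] at hFalse
    cases b
    · simp only [Bool.not_false] at halt
      omega
    · simp only [Bool.not_true] at halt
      omega
end

section
/- The graph of the d-dimensional hypercube Q_d is Hamilton-laceable for d ≥ 1: for any two vertices u, v of opposite parity (differing in an odd number of coordinates), there is a Hamilton path of Q_d from u to v. -/
/-- The `d`-dimensional hypercube graph: vertices are bitstrings of length `d`, with
edges between strings differing in exactly one coordinate. -/
def cubeGraph (d : ℕ) : SimpleGraph (Fin d → Bool) where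
  Adj x y := ∃ i : Fin d, x i ≠ y i ∧ ∀ j : Fin d, j ≠ i → x j = y j
  symm := by
    constructor
    rintro x y ⟨i, h1, h2⟩
    exact ⟨i, fun h => h1 h.symm, fun j hj => (h2 j hj).symm⟩
  loopless := by
    constructor
    rintro x ⟨i, h1, -⟩
    exact h1 rfl

namespace CubeLaceable

open SimpleGraph Finset

/-- Number of coordinates where two bitstrings differ. -/
def diffCard {d : ℕ} (u v : Fin d → Bool) : ℕ :=
  (Finset.univ.filter fun i => u i ≠ v i).card

lemma diffCard_symm {d : ℕ} (u v : Fin d → Bool) : diffCard u v = diffCard v u := by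
  unfold diffCard
  congr 1
  ext i
  simp [ne_comm]

lemma diffCard_cast {d : ℕ} (x y z : Fin d → Bool) :
    (diffCard x z : ZMod 2) = (diffCard x y : ZMod 2) + diffCard y z := by
  simp only [diffCard, Finset.card_filter]
  push_cast
  rw [← Finset.sum_add_distrib]
  refine Finset.sum_congr rfl fun i _ => ?_
  cases hx : x i <;> cases hy : y i <;> cases hz : z i <;> simp <;> decide

lemma odd_iff_cast (n : ℕ) : Odd n ↔ (n : ZMod 2) = 1 := by
  rw [Nat.odd_iff, ← ZMod.natCast_mod]
  rcases Nat.mod_two_eq_zero_or_one n with h | h <;> rw [h] <;>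
    simp

lemma diffCard_eq_one_of_adj {d : ℕ} {x y : Fin d → Bool}
    (h : (cubeGraph d).Adj x y) : diffCard x y = 1 := by
  obtain ⟨i, h1, h2⟩ := h
  unfold diffCard
  rw [Finset.card_eq_one]
  refine ⟨i, ?_⟩
  ext j
  simp only [Finset.mem_filter, Finset.mem_univ, true_and, Finset.mem_singleton]
  constructor
  · intro hj
    by_contra hji
    exact hj (h2 j hji)
  · rintro rfl
    exact h1

lemma diffCard_update {d : ℕ} (x : Fin d → Bool) (i : Fin d) :
    diffCard x (Function.update x i (!(x i))) = 1 := by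
  unfold diffCard
  rw [Finset.card_eq_one]
  refine ⟨i, ?_⟩
  ext j
  simp only [Finset.mem_filter, Finset.mem_univ, true_and, Finset.mem_singleton]
  constructor
  · intro hj
    by_contra hji
    rw [Function.update_of_ne hji] at hj
    exact hj rfl
  · rintro rfl
    simp

lemma diffCard_succ {d : ℕ} (u v : Fin (d + 1) → Bool) :
    diffCard u v = (if u 0 = v 0 then 0 else 1) + diffCard (Fin.tail u) (Fin.tail v) := by
  unfold diffCard
  rw [Finset.card_filter, Finset.card_filter, Fin.sum_univ_succ]
  congr 1
  · by_cases h : u 0 = v 0 <;> simp [h]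

/-- The homomorphism embedding `Q_d` into `Q_{d+1}` as the sub-cube with first
coordinate `b`. -/
def cubeHom (d : ℕ) (b : Bool) : cubeGraph d →g cubeGraph (d + 1) where
  toFun x := Fin.cons b x
  map_rel' := by
    rintro x y ⟨i, h1, h2⟩
    refine ⟨i.succ, by simpa using h1, ?_⟩
    intro j hj
    rcases Fin.eq_zero_or_eq_succ j with rfl | ⟨k, rfl⟩
    · simp
    · simp only [Fin.cons_succ]
      exact h2 k (fun hk => hj (by rw [hk]))

attribute [reducible] cubeHom

lemma cross_adj {d : ℕ} (b b' : Bool) (hb : b ≠ b') (x : Fin d → Bool) :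
    (cubeGraph (d + 1)).Adj (Fin.cons b x) (Fin.cons b' x) := by
  refine ⟨0, by simpa using hb, ?_⟩
  intro j hj
  rcases Fin.eq_zero_or_eq_succ j with rfl | ⟨k, rfl⟩
  · exact absurd rfl hj
  · simp

lemma count_map_support {d : ℕ} {x y : Fin d → Bool} (b : Bool)
    (p : (cubeGraph d).Walk x y) (hp : p.IsHamiltonian) (w : Fin (d + 1) → Bool) :
    ((p.map (cubeHom d b)).support).count w = if w 0 = b then 1 else 0 := by
  rw [SimpleGraph.Walk.support_map]
  have hcoe : ⇑(cubeHom d b) = (fun t => Fin.cons b t : (Fin d → Bool) → Fin (d + 1) → Bool) := rfl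
  by_cases hw : w 0 = b
  · rw [if_pos hw]
    have hwc : w = Fin.cons b (Fin.tail w) := by
      conv_lhs => rw [← Fin.cons_self_tail w]
      rw [hw]
    have hinj : Function.Injective (fun t => Fin.cons b t : (Fin d → Bool) → Fin (d + 1) → Bool) :=
      Fin.cons_right_injective (α := fun _ : Fin (d + 1) => Bool) b
    rw [hwc, hcoe, List.count_map_of_injective _ _ hinj]
    exact hp _
  · rw [if_neg hw]
    apply List.count_eq_zero_of_not_mem
    intro hmem
    rcases List.mem_map.mp hmem with ⟨t, -, rfl⟩
    rw [hcoe] at hw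
    exact hw (by simp)

lemma main : ∀ d : ℕ, 1 ≤ d → ∀ u v : Fin d → Bool, Odd (diffCard u v) →
    ∃ p : (cubeGraph d).Walk u v, p.IsHamiltonian := by
  intro d
  induction d with
  | zero => omega
  | succ d IH =>
    intro _ u v hodd
    rcases Nat.eq_zero_or_pos d with rfl | hd'
    · -- base case: d = 1
      have h0 : u 0 ≠ v 0 := by
        intro h
        have hzero : diffCard u v = 0 := by
          unfold diffCard
          rw [Finset.card_eq_zero]
          ext j
          simp only [Finset.mem_filter, Finset.mem_univ, true_and,
            Finset.notMem_empty, iff_false, not_not]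
          have hj : j = 0 := Fin.ext (by omega)
          rw [hj]
          exact h
        rw [hzero] at hodd
        exact absurd (Nat.odd_iff.mp hodd) (by omega)
      have huv : u ≠ v := fun h => h0 (by rw [h])
      have adj : (cubeGraph 1).Adj u v :=
        ⟨0, h0, fun j hj => absurd (Fin.ext (by omega) : j = 0) hj⟩
      refine ⟨SimpleGraph.Walk.cons adj SimpleGraph.Walk.nil, ?_⟩
      intro w
      have hall : ∀ z : Fin 1 → Bool, w 0 = z 0 → w = z := by
        intro z hz
        funext i
        have hi : i = 0 := Fin.ext (by omega)
        rw [hi]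
        exact hz
      have hw : w = u ∨ w = v := by
        by_cases h : w 0 = u 0
        · exact Or.inl (hall u h)
        · refine Or.inr (hall v ?_)
          cases hu0 : u 0 <;> cases hv0 : v 0 <;> cases hw0 : w 0 <;>
            simp_all
      simp only [SimpleGraph.Walk.support_cons, SimpleGraph.Walk.support_nil]
      rcases hw with rfl | rfl
      · simp [List.count_cons, huv.symm]
      · simp [List.count_cons, huv]
    · -- inductive step: d ≥ 1
      obtain ⟨x, hx⟩ : ∃ x, x = Fin.tail u := ⟨_, rfl⟩
      obtain ⟨y, hy⟩ : ∃ y, y = Fin.tail v := ⟨_, rfl⟩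
      have hdiff := diffCard_succ u v
      rw [← hx, ← hy] at hdiff
      have hu' : Fin.cons (u 0) x = u := by rw [hx]; exact Fin.cons_self_tail u
      by_cases h00 : u 0 = v 0
      · -- Case A: same sub-cube
        rw [if_pos h00, zero_add] at hdiff
        have hxy : Odd (diffCard x y) := hdiff ▸ hodd
        obtain ⟨P, hP⟩ := IH hd' x y hxy
        have hne : x ≠ y := by
          rintro rfl
          have hzero : diffCard x x = 0 := by unfold diffCard; simp
          rw [hzero] at hxy
          exact absurd (Nat.odd_iff.mp hxy) (by omega)
        cases P with
        | nil => exact absurd rfl hne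
        | @cons _ z _ h q =>
          have hz : Odd (diffCard x z) := by
            rw [diffCard_eq_one_of_adj h]; exact odd_one
          obtain ⟨R, hR⟩ := IH hd' x z hz
          have hv' : Fin.cons (u 0) y = v := by
            rw [hy, h00]; exact Fin.cons_self_tail v
          refine ⟨(SimpleGraph.Walk.cons
              (cross_adj (u 0) (!(u 0)) (by cases u 0 <;> simp) x)
              ((R.map (cubeHom d (!(u 0)))).append
                (SimpleGraph.Walk.cons (cross_adj (!(u 0)) (u 0) (by cases u 0 <;> simp) z)
                  (q.map (cubeHom d (u 0)))))).copy hu' hv', ?_⟩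
          intro w
          rw [SimpleGraph.Walk.support_copy]
          have cP := count_map_support (u 0) (SimpleGraph.Walk.cons h q) hP w
          have cR := count_map_support (!(u 0)) R hR w
          simp only [SimpleGraph.Walk.map_cons, SimpleGraph.Walk.support_cons,
            List.count_cons] at cP
          rw [SimpleGraph.Walk.support_cons, SimpleGraph.Walk.support_append,
            SimpleGraph.Walk.support_cons]
          simp only [List.tail_cons, List.count_cons, List.count_append]
          have harr : (cubeHom d (u 0)) x = Fin.cons (u 0) x := rfl
          rw [harr] at cP
          by_cases hwa : w 0 = u 0
          · rw [if_pos hwa] at cP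
            have hwn : w 0 ≠ !(u 0) := by rw [hwa]; cases u 0 <;> simp
            rw [if_neg hwn] at cR
            omega
          · rw [if_neg hwa] at cP
            have hwn : w 0 = !(u 0) := by cases hu0 : u 0 <;> cases hw0 : w 0 <;> simp_all
            rw [if_pos hwn] at cR
            omega
      · -- Case B: different sub-cubes
        rw [if_neg h00] at hdiff
        have hveq : v 0 = !(u 0) := by cases hu0 : u 0 <;> cases hv0 : v 0 <;> simp_all
        have heven : (diffCard x y : ZMod 2) = 0 := by
          have hmod : diffCard x y % 2 = 0 := by
            have := Nat.odd_iff.mp (hdiff ▸ hodd)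
            omega
          rw [← ZMod.natCast_mod, hmod]
          simp
        obtain ⟨z, hzdef⟩ : ∃ z, z = Function.update x ⟨0, hd'⟩ (!(x ⟨0, hd'⟩)) := ⟨_, rfl⟩
        have hxz : diffCard x z = 1 := by rw [hzdef]; exact diffCard_update _ _
        have hzy : Odd (diffCard z y) := by
          rw [odd_iff_cast, diffCard_cast z x y, diffCard_symm z x, hxz, heven]
          decide
        obtain ⟨P, hP⟩ := IH hd' x z (by rw [hxz]; exact odd_one)
        obtain ⟨Q, hQ⟩ := IH hd' z y hzy
        have hv' : Fin.cons (!(u 0)) y = v := by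
          rw [hy, ← hveq]; exact Fin.cons_self_tail v
        refine ⟨((P.map (cubeHom d (u 0))).append
            (SimpleGraph.Walk.cons (cross_adj (u 0) (!(u 0)) (by cases u 0 <;> simp) z)
              (Q.map (cubeHom d (!(u 0)))))).copy hu' hv', ?_⟩
        intro w
        rw [SimpleGraph.Walk.support_copy]
        have cP := count_map_support (u 0) P hP w
        have cQ := count_map_support (!(u 0)) Q hQ w
        rw [SimpleGraph.Walk.support_append, SimpleGraph.Walk.support_cons]
        simp only [List.tail_cons, List.count_append]
        by_cases hwa : w 0 = u 0
        · rw [if_pos hwa] at cP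
          have hwn : w 0 ≠ !(u 0) := by rw [hwa]; cases u 0 <;> simp
          rw [if_neg hwn] at cQ
          omega
        · rw [if_neg hwa] at cP
          have hwn : w 0 = !(u 0) := by cases hu0 : u 0 <;> cases hw0 : w 0 <;> simp_all
          rw [if_pos hwn] at cQ
          omega

end CubeLaceable

/-- The hypercube `Q_d` is Hamilton-laceable: for any two vertices differing in an odd
number of coordinates (i.e., of opposite parity) there is a Hamilton path joining them. -/
theorem cubeGraph_hamilton_laceable (d : ℕ) (hd : 1 ≤ d) (u v : Fin d → Bool)
    (hodd : Odd (Finset.univ.filter fun i => u i ≠ v i).card) :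
    ∃ p : (cubeGraph d).Walk u v, p.IsHamiltonian :=
  CubeLaceable.main d hd u v hodd
end
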